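/- arXiv:2112.13825 — 10 statements merged into one kernel-verified Lean document; each statement's English description precedes it below -/
import Mathlib

section
/- Let C be a finite closure algebra (or finite sub-closure-algebra of the powerset of a topological space) generated as a Boolean algebra by its closed elements. If U and V are distinct atoms of C, then cl(U) ≠ cl(V). -/
/-!
Fix distinct atoms `U`, `V` with `cl U = cl V`. For a closed `a` we have `x ≤ a ↔ cl x ≤ a`, so
`U` and `V` lie below the same closed elements. Since atoms of a Boolean algebra are prime
(`U ≤ b ⊔ c ↔ U ≤ b ∨ U ≤ c`, `U ≤ bᶜ ↔ ¬ U ≤ b`), the elements that do not separate `U` from `V`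
form a Boolean subalgebra; it contains the closed elements, hence is everything, and `V` itself
then gives `U ≤ V`, i.e. `U = V`.
-/

section Atoms

variable {α : Type*}

lemma IsAtom.le_sup_iff [DistribLattice α] [OrderBot α] {a b c : α} (ha : IsAtom a) :
    a ≤ b ⊔ c ↔ a ≤ b ∨ a ≤ c := by
  rw [← not_iff_not, not_or, ha.not_le_iff_disjoint, ha.not_le_iff_disjoint,
    ha.not_le_iff_disjoint, disjoint_sup_right]

lemma IsAtom.le_compl_iff [BooleanAlgebra α] {a b : α} (ha : IsAtom a) : a ≤ bᶜ ↔ ¬ a ≤ b := by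
  rw [le_compl_iff_disjoint_right, ha.not_le_iff_disjoint]

lemma IsAtom.eq_of_forall_le_iff_of_generates [BooleanAlgebra α] {G : Set α}
    (hgen : ∀ S : Set α, G ⊆ S → ⊥ ∈ S →
      (∀ a ∈ S, aᶜ ∈ S) → (∀ a b, a ∈ S → b ∈ S → a ⊔ b ∈ S) → ∀ x, x ∈ S)
    {U V : α} (hU : IsAtom U) (hV : IsAtom V) (hG : ∀ g ∈ G, U ≤ g ↔ V ≤ g) : U = V := by
  have hsep : ∀ x, U ≤ x ↔ V ≤ x := by
    refine hgen {x | U ≤ x ↔ V ≤ x} hG ?_ ?_ ?_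
    · simp only [Set.mem_ofPred_eq, le_bot_iff, hU.ne_bot, hV.ne_bot]
    · rintro a (ha : U ≤ a ↔ V ≤ a)
      rw [Set.mem_ofPred_eq, hU.le_compl_iff, hV.le_compl_iff, ha]
    · rintro a b (ha : U ≤ a ↔ V ≤ a) (hb : U ≤ b ↔ V ≤ b)
      rw [Set.mem_ofPred_eq, hU.le_sup_iff, hV.le_sup_iff, ha, hb]
  exact (hV.le_iff.mp ((hsep V).mpr le_rfl)).resolve_left hU.ne_bot

end Atoms

lemma le_iff_map_le_of_map_eq_self {α : Type*} [Preorder α] {cl : α → α} (hle : ∀ a, a ≤ cl a)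
    (hmono : Monotone cl) {a x : α} (ha : cl a = a) : x ≤ a ↔ cl x ≤ a :=
  ⟨fun h => ha ▸ hmono h, (hle x).trans⟩

theorem closures_of_distinct_atoms_general
    {C : Type*} [BooleanAlgebra C] (cl : C → C)
    (hle : ∀ a, a ≤ cl a)
    (hsup : ∀ a b, cl (a ⊔ b) = cl a ⊔ cl b)
    (hgen : ∀ S : Set C, {a | cl a = a} ⊆ S → ⊥ ∈ S →
      (∀ a ∈ S, aᶜ ∈ S) → (∀ a b, a ∈ S → b ∈ S → a ⊔ b ∈ S) → ∀ x, x ∈ S)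
    (U V : C) (hU : IsAtom U) (hV : IsAtom V) (hne : U ≠ V) :
    cl U ≠ cl V := by
  intro hUV
  have hmono : Monotone cl := OrderHomClass.mono (SupHom.mk cl hsup)
  refine hne (hU.eq_of_forall_le_iff_of_generates hgen hV fun a ha => ?_)
  rw [le_iff_map_le_of_map_eq_self hle hmono (x := U) ha,
    le_iff_map_le_of_map_eq_self hle hmono (x := V) ha, hUV]

/-- In a finite closure algebra generated as a Boolean algebra by its closed
elements, distinct atoms have distinct closures. -/
theorem closures_of_distinct_atoms
    {C : Type*} [BooleanAlgebra C] [Finite C] (cl : C → C)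
    (hle : ∀ a, a ≤ cl a)
    (hidem : ∀ a, cl (cl a) = cl a)
    (hsup : ∀ a b, cl (a ⊔ b) = cl a ⊔ cl b)
    (h0 : cl ⊥ = ⊥)
    (hgen : ∀ S : Set C, {a | cl a = a} ⊆ S → ⊥ ∈ S →
      (∀ a ∈ S, aᶜ ∈ S) → (∀ a b, a ∈ S → b ∈ S → a ⊔ b ∈ S) → ∀ x, x ∈ S)
    (U V : C) (hU : IsAtom U) (hV : IsAtom V) (hne : U ≠ V) :
    cl U ≠ cl V :=
  closures_of_distinct_atoms_general cl hle hsup hgen U V hU hV hne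
end

section
/- Let D be a finite TBA generated by its closed elements whose atoms {X_p | p ∈ P} form a complete P-partition of X = 1_D for the PO system P of atoms (with q < p iff X_q ≤ (X_p)'). Then the map γ : Q ↦ ⋃_{q∈Q} X_q is a TBA-isomorphism from (2^P, ') to D, where Q' = {p | p < q for some q ∈ Q}, and γ maps lower subsets of P bijectively onto closed elements of D. -/
/-!
Everything is checked atom by atom: for atoms `X_p` one has `X_p ≤ γ Q ↔ p ∈ Q`, and in a finite
Boolean algebra an element is determined by the atoms below it. Since `'` preserves finite joins,
`X_p ≤ (γ Q)'` holds iff `X_p ≤ (X_q)'`, i.e. `p < q`, for some `q ∈ Q`.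
-/

open scoped Classical

open Finset

theorem IsAtom.le_finset_sup_iff {D ι : Type*} [DistribLattice D] [OrderBot D] {a : D}
    (ha : IsAtom a) {s : Finset ι} {f : ι → D} : a ≤ s.sup f ↔ ∃ i ∈ s, a ≤ f i := by
  rw [← not_iff_not, ha.not_le_iff_disjoint, Finset.disjoint_sup_right]
  simp only [← ha.not_le_iff_disjoint, not_exists, not_and]

section setSup

variable {D P : Type*} [Fintype P]

/-- The map `γ` of the paper: `Q ↦ ⋃_{q ∈ Q} X_q`. -/
noncomputable def setSup [SemilatticeSup D] [OrderBot D] (X : P → D) (Q : Set P) : D :=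
  (univ.filter (· ∈ Q)).sup X

section SemilatticeSup

variable [SemilatticeSup D] [OrderBot D] {X : P → D}

theorem setSup_empty : setSup X ∅ = ⊥ := by
  simp [setSup]

theorem setSup_union (Q R : Set P) : setSup X (Q ∪ R) = setSup X Q ⊔ setSup X R := by
  simp only [setSup, Set.mem_union, filter_or, sup_union]

theorem setSup_mono : Monotone (setSup X) := fun _ _ hQR =>
  sup_mono fun _ => by simpa only [mem_filter, mem_univ, true_and] using @hQR _

end SemilatticeSup

section DistribLattice

variable [DistribLattice D] [OrderBot D] {X : P → D}

variable (hX : ∀ p, IsAtom (X p)) (hinj : Function.Injective X)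
include hX hinj

theorem le_setSup_iff {p : P} {Q : Set P} : X p ≤ setSup X Q ↔ p ∈ Q := by
  refine ⟨fun h => ?_, fun hp => le_sup (by simpa using hp)⟩
  obtain ⟨q, hq, hpq⟩ := (hX p).le_finset_sup_iff.mp h
  rw [hinj (((hX q).le_iff.mp hpq).resolve_left (hX p).1)]
  simpa using hq

theorem setSup_le_setSup_iff {Q R : Set P} : setSup X Q ≤ setSup X R ↔ Q ⊆ R :=
  ⟨fun h _ hp => (le_setSup_iff hX hinj).mp (((le_setSup_iff hX hinj).mpr hp).trans h),
    fun h => setSup_mono h⟩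

omit hinj in
theorem le_apply_setSup_iff {d : D → D} (h0 : d ⊥ = ⊥) (hsup : ∀ a b, d (a ⊔ b) = d a ⊔ d b)
    {p : P} {Q : Set P} : X p ≤ d (setSup X Q) ↔ ∃ q ∈ Q, X p ≤ d (X q) := by
  rw [setSup, apply_sup_eq_sup_comp d hsup h0, (hX p).le_finset_sup_iff]
  simp only [mem_filter, mem_univ, true_and, Function.comp_apply]

end DistribLattice

variable [BooleanAlgebra D] [IsAtomic D] {X : P → D} (hX : ∀ p, IsAtom (X p))
  (hinj : Function.Injective X) (hsurj : ∀ a : D, IsAtom a → ∃ p, a = X p)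
include hsurj

omit [Fintype P] in
theorem eq_of_forall_le_iff_of_atoms {x y : D} (h : ∀ p, X p ≤ x ↔ X p ≤ y) : x = y :=
  BooleanAlgebra.eq_iff_atom_le_iff.mpr fun a ha => by
    obtain ⟨p, rfl⟩ := hsurj a ha
    exact h p

include hX hinj

theorem setSup_setOf_le (x : D) : setSup X {p | X p ≤ x} = x :=
  eq_of_forall_le_iff_of_atoms hsurj fun _ => le_setSup_iff hX hinj

theorem setSup_bijective : Function.Bijective (setSup X) :=
  ⟨fun Q R h => Set.ext fun p => by rw [← le_setSup_iff hX hinj, h, le_setSup_iff hX hinj],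
    fun x => ⟨_, setSup_setOf_le hX hinj hsurj x⟩⟩

theorem setSup_compl (Q : Set P) : setSup X Qᶜ = (setSup X Q)ᶜ :=
  eq_of_forall_le_iff_of_atoms hsurj fun p => by
    rw [le_setSup_iff hX hinj, le_compl_iff_disjoint_right, ← (hX p).not_le_iff_disjoint,
      le_setSup_iff hX hinj, Set.mem_compl_iff]

theorem setSup_setOf_le_apply {d : D → D} (h0 : d ⊥ = ⊥)
    (hsup : ∀ a b, d (a ⊔ b) = d a ⊔ d b) (Q : Set P) :
    setSup X {p | ∃ q ∈ Q, X p ≤ d (X q)} = d (setSup X Q) :=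
  eq_of_forall_le_iff_of_atoms hsurj fun p => by
    rw [le_setSup_iff hX hinj, le_apply_setSup_iff hX h0 hsup]
    exact Iff.rfl

end setSup

theorem complete_partition_gives_TBA_iso_general
    {D P : Type*} [BooleanAlgebra D] [Fintype D] [Fintype P] (d : D → D)
    (h0 : d ⊥ = ⊥)
    (hsup : ∀ a b, d (a ⊔ b) = d a ⊔ d b)
    (Xp : P → D)
    (hatom : ∀ p, IsAtom (Xp p))
    (hinj : Function.Injective Xp)
    (hsurj : ∀ a : D, IsAtom a → ∃ p, a = Xp p)
    (lt : P → P → Prop)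
    (hlt : ∀ p q : P, lt q p ↔ Xp q ≤ d (Xp p)) :
    ∀ γ : Set P → D,
      γ = (fun Q => (Finset.univ.filter (fun q : P => q ∈ Q)).sup Xp) →
      Function.Bijective γ ∧
      (∀ Q R : Set P, γ (Q ∪ R) = γ Q ⊔ γ R) ∧
      (∀ Q : Set P, γ Qᶜ = (γ Q)ᶜ) ∧
      (γ ∅ = ⊥) ∧
      (∀ Q : Set P, γ {p | ∃ q ∈ Q, lt p q} = d (γ Q)) ∧
      (∀ Q : Set P, (∀ p ∈ Q, ∀ q, lt q p → q ∈ Q) ↔ d (γ Q) ≤ γ Q) := by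
  intro γ hγ
  obtain rfl : γ = setSup Xp := hγ
  have hderived (Q : Set P) : setSup Xp {p | ∃ q ∈ Q, lt p q} = d (setSup Xp Q) := by
    simp_rw [hlt]
    exact setSup_setOf_le_apply hatom hinj hsurj h0 hsup Q
  refine ⟨setSup_bijective hatom hinj hsurj, setSup_union, setSup_compl hatom hinj hsurj,
    setSup_empty, hderived, fun Q => ?_⟩
  rw [← hderived, setSup_le_setSup_iff hatom hinj, Set.ofPred_subset]
  exact ⟨fun hQ p ⟨q, hq, hpq⟩ => hQ q hq p hpq, fun hQ q hq p hpq => hQ p ⟨q, hq, hpq⟩⟩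

/-- Let `D` be a finite TBA generated by its closed elements, whose atoms
`{X_p | p ∈ P}` form a complete `P`-partition of the top for the PO system `P`
(with `q < p` iff `X_q ≤ (X_p)'`). Then `γ : Q ↦ ⋃_{q ∈ Q} X_q` is a TBA-isomorphism
from `(2^P, ')` (where `Q' = {p | ∃ q ∈ Q, p < q}`) to `D`, and `γ` maps lower
subsets of `P` exactly onto closed elements of `D`. -/
theorem complete_partition_gives_TBA_iso
    {D P : Type*} [BooleanAlgebra D] [Fintype D] [Fintype P] (d : D → D)
    (h0 : d ⊥ = ⊥)
    (hsup : ∀ a b, d (a ⊔ b) = d a ⊔ d b)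
    (hidem : ∀ a, d (d a) ≤ d a)
    (hgen : ∀ S : Set D, {a | d a ≤ a} ⊆ S → ⊥ ∈ S →
      (∀ a ∈ S, aᶜ ∈ S) → (∀ a b, a ∈ S → b ∈ S → a ⊔ b ∈ S) → ∀ x, x ∈ S)
    (Xp : P → D)
    (hatom : ∀ p, IsAtom (Xp p))
    (hinj : Function.Injective Xp)
    (hsurj : ∀ a : D, IsAtom a → ∃ p, a = Xp p)
    (lt : P → P → Prop)
    (hlt : ∀ p q : P, lt q p ↔ Xp q ≤ d (Xp p)) :
    ∀ γ : Set P → D,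
      γ = (fun Q => (Finset.univ.filter (fun q : P => q ∈ Q)).sup Xp) →
      Function.Bijective γ ∧
      (∀ Q R : Set P, γ (Q ∪ R) = γ Q ⊔ γ R) ∧
      (∀ Q : Set P, γ Qᶜ = (γ Q)ᶜ) ∧
      (γ ∅ = ⊥) ∧
      (∀ Q : Set P, γ {p | ∃ q ∈ Q, lt p q} = d (γ Q)) ∧
      (∀ Q : Set P, (∀ p ∈ Q, ∀ q, lt q p → q ∈ Q) ↔ d (γ Q) ≤ γ Q) :=
  complete_partition_gives_TBA_iso_general d h0 hsup Xp hatom hinj hsurj lt hlt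
end

section
/- Let P be a finite PO system and {X_p | p ∈ P} a complete P-partition of the Stone space X of a Boolean ring R (identified with the compact open subsets of X). Then a point x lies in X_p if and only if x has a neighbourhood basis of p-trim compact open sets. -/
/-!
Since `P` is finite, every small enough neighbourhood of `x` meets exactly those parts `X_q`
whose closure contains `x`. Completeness of the partition gives
`closure X_q = X_q ∪ ⋃_{r < q} X_r`, so for `x ∈ X_p` these are the parts with `q ≥ p`, and
when `p ≮ p` the point `x` is isolated in `X_p`. Hence small compact open neighbourhoods of
`x ∈ X_p` are `p`-trim. Conversely, if `x ∈ X_q` has arbitrarily small `p`-trim neighbourhoods,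
their type gives `q ≥ p`, while `x ∈ closure X_p` gives `q ≤ p`.
-/

/-- The type of a subset `A` relative to the partition `Xp`. -/
def typeOf {X P : Type*} (Xp : P → Set X) (A : Set X) : Set P :=
  {p | (A ∩ Xp p).Nonempty}

/-- `A` is a `p`-trim set: a compact open set whose type is `{q | q ≥ p}`, meeting
`X_p` in exactly one point when `p ∈ P^d` (i.e. `p ≮ p`). -/
def IsTrim {X P : Type*} [TopologicalSpace X] (lt : P → P → Prop)
    (Xp : P → Set X) (p : P) (A : Set X) : Prop :=
  IsCompact A ∧ IsOpen A ∧ typeOf Xp A = {q | lt p q ∨ q = p} ∧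
    (¬ lt p p → ∃! x, x ∈ A ∩ Xp p)

open Set Filter Topology

theorem exists_isCompact_isOpen_subset_of_mem_nhds {X : Type*} [TopologicalSpace X]
    [LocallyCompactSpace X] [T2Space X] [TotallyDisconnectedSpace X] {x : X} {U : Set X}
    (hU : U ∈ 𝓝 x) : ∃ A, IsCompact A ∧ IsOpen A ∧ x ∈ A ∧ A ⊆ U := by
  obtain ⟨K, hK, hKU, hKc⟩ := local_compact_nhds hU
  obtain ⟨A, hA, hxA, hAK⟩ := loc_compact_Haus_tot_disc_of_zero_dim.mem_nhds_iff.1 hK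
  exact ⟨A, hKc.of_isClosed_subset hA.1 hAK, hA.2, hxA, hAK.trans hKU⟩

section

variable {X P : Type*} {Xp : P → Set X} {x : X}

theorem Pairwise.index_eq_of_mem (hdisj : Pairwise (Function.onFun Disjoint Xp)) {p q : P}
    (hp : x ∈ Xp p) (hq : x ∈ Xp q) : p = q :=
  hdisj.eq (not_disjoint_iff.2 ⟨x, hp, hq⟩)

variable [TopologicalSpace X]

theorem exists_mem_nhds_typeOf_eq [Finite P] (x : X) :
    ∃ N ∈ 𝓝 x, ∀ A ∈ 𝓝 x, A ⊆ N → typeOf Xp A = {q | x ∈ closure (Xp q)} := by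
  have hN : ∀ᶠ y in 𝓝 x, ∀ q, y ∈ Xp q → x ∈ closure (Xp q) := by
    refine eventually_all.2 fun q => ?_
    by_cases hq : x ∈ closure (Xp q)
    · exact .of_forall fun _ _ => hq
    · rw [mem_closure_iff_frequently, not_frequently] at hq
      exact hq.mono fun _ hy hyq => absurd hyq hy
  refine ⟨_, hN, fun A hA hAN => Subset.antisymm ?_ fun q hq => mem_closure_iff_nhds.1 hq A hA⟩
  rintro q ⟨y, hyA, hyq⟩
  exact hAN hyA q hyq

variable {lt : P → P → Prop} {p q : P}

theorem mem_derivedSet_iff_of_mem (hdisj : Pairwise (Function.onFun Disjoint Xp))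
    (hderiv : ∀ p, derivedSet (Xp p) = ⋃ q ∈ {q | lt q p}, Xp q) (hx : x ∈ Xp p) :
    x ∈ derivedSet (Xp q) ↔ lt p q := by
  rw [hderiv]
  simp only [mem_iUnion, mem_ofPred_eq, exists_prop]
  exact ⟨fun ⟨r, hr, hxr⟩ => hdisj.index_eq_of_mem hxr hx ▸ hr, fun h => ⟨p, h, hx⟩⟩

theorem mem_closure_iff_of_mem (hdisj : Pairwise (Function.onFun Disjoint Xp))
    (hderiv : ∀ p, derivedSet (Xp p) = ⋃ q ∈ {q | lt q p}, Xp q) (hx : x ∈ Xp p) :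
    x ∈ closure (Xp q) ↔ lt p q ∨ q = p := by
  rw [closure_eq_self_union_derivedSet, mem_union, mem_derivedSet_iff_of_mem hdisj hderiv hx,
    or_comm]
  exact or_congr_right ⟨fun h => hdisj.index_eq_of_mem h hx, fun h => h ▸ hx⟩

theorem eventually_mem_imp_eq_of_not_lt (hdisj : Pairwise (Function.onFun Disjoint Xp))
    (hderiv : ∀ p, derivedSet (Xp p) = ⋃ q ∈ {q | lt q p}, Xp q) (hx : x ∈ Xp p)
    (hpp : ¬ lt p p) : ∀ᶠ y in 𝓝 x, y ∈ Xp p → y = x := by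
  have hacc : ¬ AccPt x (𝓟 (Xp p)) := (mem_derivedSet_iff_of_mem hdisj hderiv hx).not.2 hpp
  rw [accPt_iff_frequently, not_frequently] at hacc
  exact hacc.mono fun _ hy hyp => not_not.1 fun hne => hy ⟨hne, hyp⟩

theorem exists_isTrim_subset [Finite P] [LocallyCompactSpace X] [T2Space X]
    [TotallyDisconnectedSpace X] (hdisj : Pairwise (Function.onFun Disjoint Xp))
    (hderiv : ∀ p, derivedSet (Xp p) = ⋃ q ∈ {q | lt q p}, Xp q) (hx : x ∈ Xp p)
    {U : Set X} (hU : U ∈ 𝓝 x) : ∃ A, IsTrim lt Xp p A ∧ x ∈ A ∧ A ⊆ U := by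
  obtain ⟨N, hN, htype⟩ := exists_mem_nhds_typeOf_eq (Xp := Xp) x
  have hiso : ∀ᶠ y in 𝓝 x, ¬ lt p p → y ∈ Xp p → y = x :=
    eventually_imp_distrib_left.2 (eventually_mem_imp_eq_of_not_lt hdisj hderiv hx)
  obtain ⟨A, hAc, hAo, hxA, hAsub⟩ :=
    exists_isCompact_isOpen_subset_of_mem_nhds (inter_mem hU (inter_mem hN hiso))
  refine ⟨A, ⟨hAc, hAo, ?_, fun hpp => ⟨x, ⟨hxA, hx⟩, fun y hy => (hAsub hy.1).2.2 hpp hy.2⟩⟩,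
    hxA, fun y hy => (hAsub hy).1⟩
  rw [htype A (hAo.mem_nhds hxA) fun y hy => (hAsub hy).2.1]
  ext q
  exact mem_closure_iff_of_mem hdisj hderiv hx

theorem mem_of_forall_isTrim_subset (hanti : ∀ a b, lt a b → lt b a → a = b)
    (hdisj : Pairwise (Function.onFun Disjoint Xp)) (hcover : (⋃ p, Xp p) = univ)
    (hderiv : ∀ p, derivedSet (Xp p) = ⋃ q ∈ {q | lt q p}, Xp q)
    (h : ∀ U ∈ 𝓝 x, ∃ A, IsTrim lt Xp p A ∧ x ∈ A ∧ A ⊆ U) : x ∈ Xp p := by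
  obtain ⟨q, hq⟩ : ∃ q, x ∈ Xp q := mem_iUnion.1 (hcover ▸ mem_univ x)
  obtain ⟨A₀, ⟨-, -, hA₀, -⟩, hxA₀, -⟩ := h univ univ_mem
  have hpq : q ∈ {q | lt p q ∨ q = p} := hA₀ ▸ ⟨x, hxA₀, hq⟩
  have hclosure : x ∈ closure (Xp p) := mem_closure_iff_nhds.2 fun U hU => by
    obtain ⟨A, ⟨-, -, hA, -⟩, -, hAU⟩ := h U hU
    obtain ⟨y, hyA, hyp⟩ : p ∈ typeOf Xp A := hA ▸ Or.inr rfl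
    exact ⟨y, hAU hyA, hyp⟩
  have hqp : lt q p ∨ p = q := (mem_closure_iff_of_mem hdisj hderiv hq).1 hclosure
  obtain rfl : p = q := by
    rcases hpq with hpq | rfl
    · exact hqp.elim (hanti p q hpq) id
    · rfl
  exact hq

end

theorem mem_partition_iff_trim_nhds_basis_general
    {X P : Type*} [TopologicalSpace X] [LocallyCompactSpace X] [T2Space X]
    [TotallyDisconnectedSpace X] [Fintype P]
    (lt : P → P → Prop)
    (hanti : ∀ a b, lt a b → lt b a → a = b)
    (Xp : P → Set X)
    (hdisj : Pairwise (Function.onFun Disjoint Xp))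
    (hcover : (⋃ p, Xp p) = Set.univ)
    (hderiv : ∀ p, derivedSet (Xp p) = ⋃ q ∈ {q | lt q p}, Xp q) :
    ∀ (x : X) (p : P), x ∈ Xp p ↔
      ∀ U ∈ nhds x, ∃ A : Set X, IsTrim lt Xp p A ∧ x ∈ A ∧ A ⊆ U :=
  fun _ _ => ⟨fun hx _ hU => exists_isTrim_subset hdisj hderiv hx hU,
    mem_of_forall_isTrim_subset hanti hdisj hcover hderiv⟩

/-- For a complete `P`-partition of the Stone space `X` of a Boolean ring, `P` a finite
PO system: `x ∈ X_p` iff `x` has a neighbourhood basis of `p`-trim sets. -/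
theorem mem_partition_iff_trim_nhds_basis
    {X P : Type*} [TopologicalSpace X] [LocallyCompactSpace X] [T2Space X]
    [TotallyDisconnectedSpace X] [SecondCountableTopology X] [Fintype P]
    (lt : P → P → Prop)
    (htrans : ∀ a b c, lt a b → lt b c → lt a c)
    (hanti : ∀ a b, lt a b → lt b a → a = b)
    (Xp : P → Set X)
    (hnonempty : ∀ p, (Xp p).Nonempty)
    (hdisj : Pairwise (Function.onFun Disjoint Xp))
    (hcover : (⋃ p, Xp p) = Set.univ)
    (hderiv : ∀ p, derivedSet (Xp p) = ⋃ q ∈ {q | lt q p}, Xp q) :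
    ∀ (x : X) (p : P), x ∈ Xp p ↔
      ∀ U ∈ nhds x, ∃ A : Set X, IsTrim lt Xp p A ∧ x ∈ A ∧ A ⊆ U :=
  mem_partition_iff_trim_nhds_basis_general lt hanti Xp hdisj hcover hderiv
end

section
/- Let P be a finite PO system and {X_p | p ∈ P} a complete P-partition of the Stone space X of a Boolean ring R. If A is a p-trim compact open set and q > p, then A can be written as a disjoint union A = B ⊔ C where B is p-trim and C is q-trim. -/
open Set Filter Topology

section

variable {X P : Type*} {lt : P → P → Prop} {Xp : P → Set X}

lemma typeOf_mono {A B : Set X} (h : A ⊆ B) : typeOf Xp A ⊆ typeOf Xp B :=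
  fun _ ⟨z, hzA, hz⟩ => ⟨z, h hzA, hz⟩

lemma exists_finite_subset_typeOf_eq [Finite P] (A : Set X) :
    ∃ S ⊆ A, S.Finite ∧ typeOf Xp S = typeOf Xp A := by
  choose f hf using fun r : typeOf Xp A => r.2
  have hfA : range f ⊆ A := range_subset_iff.2 fun r => (hf r).1
  exact ⟨range f, hfA, finite_range f,
    (typeOf_mono hfA).antisymm fun r hr => ⟨f ⟨r, hr⟩, mem_range_self _, (hf ⟨r, hr⟩).2⟩⟩

lemma nonempty_inter_of_typeOf_eq {p : P} {A : Set X}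
    (htype : typeOf Xp A = {q | lt p q ∨ q = p}) : (A ∩ Xp p).Nonempty := by
  change p ∈ typeOf Xp A
  rw [htype]
  exact Or.inr rfl

lemma IsTrim.of_subset [TopologicalSpace X] {p : P} {A B : Set X} (hA : IsTrim lt Xp p A)
    (hBA : B ⊆ A) (hBc : IsCompact B) (hBo : IsOpen B) (htype : typeOf Xp B = typeOf Xp A) :
    IsTrim lt Xp p B := by
  have hBtype := htype.trans hA.2.2.1
  obtain ⟨x, hxB, hxp⟩ := nonempty_inter_of_typeOf_eq hBtype
  exact ⟨hBc, hBo, hBtype, fun hpp =>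
    ⟨x, ⟨hxB, hxp⟩, fun z hz => (hA.2.2.2 hpp).unique ⟨hBA hz.1, hz.2⟩ ⟨hBA hxB, hxp⟩⟩⟩

namespace PPartition

lemma eq_of_mem_of_mem (hdisj : Pairwise (Function.onFun Disjoint Xp)) {r s : P} {z : X}
    (hr : z ∈ Xp r) (hs : z ∈ Xp s) : r = s :=
  hdisj.eq (not_disjoint_iff.2 ⟨z, hr, hs⟩)

lemma accPt_of_lt [TopologicalSpace X]
    (hderiv : ∀ p, derivedSet (Xp p) = ⋃ q ∈ {q | lt q p}, Xp q)
    {r s : P} {y : X} (hrs : lt r s) (hy : y ∈ Xp r) : AccPt y (𝓟 (Xp s)) := by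
  rw [← mem_derivedSet, hderiv]
  exact mem_biUnion hrs hy

lemma lt_or_eq_of_mem_closure [TopologicalSpace X]
    (hdisj : Pairwise (Function.onFun Disjoint Xp))
    (hderiv : ∀ p, derivedSet (Xp p) = ⋃ q ∈ {q | lt q p}, Xp q)
    {q r : P} {y : X} (hy : y ∈ Xp q) (hyr : y ∈ closure (Xp r)) : lt q r ∨ r = q := by
  rw [closure_eq_self_union_derivedSet, hderiv] at hyr
  rcases hyr with hyr | hyr
  · exact Or.inr (eq_of_mem_of_mem hdisj hyr hy)
  · obtain ⟨s, hs, hys⟩ := mem_iUnion₂.1 hyr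
    exact Or.inl (eq_of_mem_of_mem hdisj hys hy ▸ hs)

lemma eventually_eq_of_not_lt_self [TopologicalSpace X]
    (hdisj : Pairwise (Function.onFun Disjoint Xp))
    (hderiv : ∀ p, derivedSet (Xp p) = ⋃ q ∈ {q | lt q p}, Xp q)
    {q : P} {y : X} (hqq : ¬ lt q q) (hy : y ∈ Xp q) :
    ∀ᶠ z in 𝓝 y, z ∈ Xp q → z = y := by
  have hnacc : ¬ AccPt y (𝓟 (Xp q)) := by
    rw [← mem_derivedSet, hderiv]
    intro h
    obtain ⟨s, hs, hys⟩ := mem_iUnion₂.1 h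
    exact hqq (eq_of_mem_of_mem hdisj hys hy ▸ hs)
  rw [accPt_iff_frequently, not_frequently] at hnacc
  exact hnacc.mono fun z hz hzq => not_not.1 fun hzy => hz ⟨hzy, hzq⟩

theorem exists_isClopen_subset_typeOf_eq [Finite P] [TopologicalSpace X] [LocallyCompactSpace X]
    [T2Space X] [TotallyDisconnectedSpace X] (hdisj : Pairwise (Function.onFun Disjoint Xp))
    (hderiv : ∀ p, derivedSet (Xp p) = ⋃ q ∈ {q | lt q p}, Xp q)
    {q : P} {y : X} {U : Set X} (hy : y ∈ Xp q) (hU : U ∈ 𝓝 y) :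
    ∃ C, IsClopen C ∧ C ⊆ U ∧ typeOf Xp C = {r | lt q r ∨ r = q} ∧
      (¬ lt q q → ∃! z, z ∈ C ∩ Xp q) := by
  have hfar : ∀ᶠ z in 𝓝 y, ∀ r, ¬ (lt q r ∨ r = q) → z ∉ Xp r := by
    refine eventually_all.2 fun r => ?_
    by_cases hr : lt q r ∨ r = q
    · exact .of_forall fun _ h => (h hr).elim
    · have hyr := mt (lt_or_eq_of_mem_closure hdisj hderiv hy) hr
      rw [mem_closure_iff_frequently, not_frequently] at hyr
      exact hyr.mono fun _ hz _ => hz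
  have hiso : ∀ᶠ z in 𝓝 y, ¬ lt q q → z ∈ Xp q → z = y := by
    by_cases hqq : lt q q
    · exact .of_forall fun _ h => (h hqq).elim
    · exact (eventually_eq_of_not_lt_self hdisj hderiv hqq hy).mono fun _ h _ => h
  obtain ⟨C, hC, hyC, hCsub⟩ :=
    loc_compact_Haus_tot_disc_of_zero_dim.mem_nhds_iff.1 (inter_mem hU (hfar.and hiso))
  refine ⟨C, hC, fun z hz => (hCsub hz).1, ?_,
    fun hqq => ⟨y, ⟨hyC, hy⟩, fun z hz => (hCsub hz.1).2.2 hqq hz.2⟩⟩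
  ext r
  constructor
  · rintro ⟨z, hzC, hzr⟩
    by_contra hr
    exact (hCsub hzC).2.1 r hr hzr
  · rintro (hqr | rfl)
    · obtain ⟨z, hz, -⟩ :=
        accPt_iff_nhds.1 (accPt_of_lt hderiv hqr hy) C (hC.isOpen.mem_nhds hyC)
      exact ⟨z, hz⟩
    · exact ⟨y, hyC, hy⟩

end PPartition

end

open PPartition in
theorem trim_set_splits_general
    {X P : Type*} [TopologicalSpace X] [LocallyCompactSpace X] [T2Space X]
    [TotallyDisconnectedSpace X] [Fintype P]
    (lt : P → P → Prop)
    (Xp : P → Set X)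
    (hdisj : Pairwise (Function.onFun Disjoint Xp))
    (hderiv : ∀ p, derivedSet (Xp p) = ⋃ q ∈ {q | lt q p}, Xp q)
    (p q : P) (hpq : lt p q) (A : Set X) (hA : IsTrim lt Xp p A) :
    ∃ B C : Set X, Disjoint B C ∧ A = B ∪ C ∧
      IsTrim lt Xp p B ∧ IsTrim lt Xp q C := by
  have ⟨hAc, hAo, hAtype, _⟩ := hA
  obtain ⟨x, hxA, hxp⟩ := nonempty_inter_of_typeOf_eq hAtype
  obtain ⟨S, hSA, hSfin, hStype⟩ := exists_finite_subset_typeOf_eq (Xp := Xp) A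
  have hnear : ∀ᶠ z in 𝓝 x, z ∈ A ∧ z ∉ S \ {x} :=
    Eventually.and (hAo.mem_nhds hxA) (hSfin.sdiff.isClosed.compl_mem_nhds fun h => h.2 rfl)
  obtain ⟨y, ⟨hyx, hyq⟩, hyA, hyS⟩ :=
    ((accPt_iff_frequently.1 (accPt_of_lt hderiv hpq hxp)).and_eventually hnear).exists
  obtain ⟨C, hC, hCsub, hCtype, hCuniq⟩ := exists_isClopen_subset_typeOf_eq hdisj hderiv hyq
    ((hAo.sdiff hSfin.isClosed).mem_nhds ⟨hyA, fun h => hyS ⟨h, hyx⟩⟩)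
  have hCA : C ⊆ A := fun z hz => (hCsub hz).1
  have hSB : S ⊆ A \ C := fun z hz => ⟨hSA hz, fun hzC => (hCsub hzC).2 hz⟩
  have hBtype : typeOf Xp (A \ C) = typeOf Xp A :=
    (typeOf_mono sdiff_subset).antisymm (hStype ▸ typeOf_mono hSB)
  exact ⟨A \ C, C, disjoint_sdiff_left, (sdiff_union_of_subset hCA).symm,
    hA.of_subset sdiff_subset (hAc.diff hC.isOpen) (hAo.sdiff hC.isClosed) hBtype,
    hAc.of_isClosed_subset hC.isClosed hCA, hC.isOpen, hCtype, hCuniq⟩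

/-- For a complete `P`-partition of the Stone space of a Boolean ring, `P` a finite PO
system: if `A` is `p`-trim and `q > p`, then `A = B ⊔ C` with `B` `p`-trim and `C`
`q`-trim. -/
theorem trim_set_splits
    {X P : Type*} [TopologicalSpace X] [LocallyCompactSpace X] [T2Space X]
    [TotallyDisconnectedSpace X] [SecondCountableTopology X] [Fintype P]
    (lt : P → P → Prop)
    (htrans : ∀ a b c, lt a b → lt b c → lt a c)
    (hanti : ∀ a b, lt a b → lt b a → a = b)
    (Xp : P → Set X)
    (hnonempty : ∀ p, (Xp p).Nonempty)
    (hdisj : Pairwise (Function.onFun Disjoint Xp))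
    (hcover : (⋃ p, Xp p) = Set.univ)
    (hderiv : ∀ p, derivedSet (Xp p) = ⋃ q ∈ {q | lt q p}, Xp q)
    (p q : P) (hpq : lt p q) (A : Set X) (hA : IsTrim lt Xp p A) :
    ∃ B C : Set X, Disjoint B C ∧ A = B ∪ C ∧
      IsTrim lt Xp p B ∧ IsTrim lt Xp q C :=
  trim_set_splits_general lt Xp hdisj hderiv p q hpq A hA
end

section
/- Let P be a finite PO system, {X_p} a complete P-partition of the Stone space X of a Boolean ring R, and A a compact open subset of X with p ∈ P^d ∩ T(A)_min (p is a minimal element of the type of A with p ≮ p). Then A ∩ X_p is finite. -/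
theorem IsCompact.finite_inter_of_disjoint_derivedSet {X : Type*} [TopologicalSpace X]
    {A S : Set X} (hA : IsCompact A) (hAS : Disjoint A (derivedSet S)) : (A ∩ S).Finite := by
  by_contra hinf
  obtain ⟨x, hxA, hacc⟩ :=
    Set.Infinite.exists_accPt_of_subset_isCompact hinf hA Set.inter_subset_left
  exact hAS.notMem_of_mem_left hxA (derivedSet_mono _ _ Set.inter_subset_right hacc)

theorem disjoint_derivedSet_of_minimal_mem_typeOf {X P : Type*} [TopologicalSpace X]
    {lt : P → P → Prop} {Xp : P → Set X} {A : Set X} {p : P}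
    (hderiv : derivedSet (Xp p) ⊆ ⋃ q ∈ {q | lt q p}, Xp q) (hpd : ¬ lt p p)
    (hmin : ∀ q ∈ typeOf Xp A, lt q p → q = p) :
    Disjoint A (derivedSet (Xp p)) := by
  refine Disjoint.mono_right hderiv (Set.disjoint_iUnion₂_right.2 fun q hqp => ?_)
  rw [Set.disjoint_iff_inter_eq_empty, ← Set.not_nonempty_iff_eq_empty]
  intro hAq
  exact hpd (hmin q hAq hqp ▸ hqp)

theorem compact_open_meets_discrete_min_piece_finitely_general
    {X P : Type*} [TopologicalSpace X]
    (lt : P → P → Prop)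
    (Xp : P → Set X)
    (hderiv : ∀ p, derivedSet (Xp p) = ⋃ q ∈ {q | lt q p}, Xp q)
    (A : Set X) (hAc : IsCompact A)
    (p : P) (hpd : ¬ lt p p)
    (hmin : ∀ q ∈ typeOf Xp A, lt q p → q = p) :
    (A ∩ Xp p).Finite :=
  hAc.finite_inter_of_disjoint_derivedSet <|
    disjoint_derivedSet_of_minimal_mem_typeOf (hderiv p).subset hpd hmin

/-- For a complete `P`-partition of the Stone space of a Boolean ring, `P` a finite PO
system: if `A` is compact open and `p ∈ P^d` is a minimal element of the type of `A`,
then `A ∩ X_p` is finite. -/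
theorem compact_open_meets_discrete_min_piece_finitely
    {X P : Type*} [TopologicalSpace X] [LocallyCompactSpace X] [T2Space X]
    [TotallyDisconnectedSpace X] [Fintype P]
    (lt : P → P → Prop)
    (htrans : ∀ a b c, lt a b → lt b c → lt a c)
    (hanti : ∀ a b, lt a b → lt b a → a = b)
    (Xp : P → Set X)
    (hnonempty : ∀ p, (Xp p).Nonempty)
    (hdisj : Pairwise (Function.onFun Disjoint Xp))
    (hcover : (⋃ p, Xp p) = Set.univ)
    (hderiv : ∀ p, derivedSet (Xp p) = ⋃ q ∈ {q | lt q p}, Xp q)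
    (A : Set X) (hAc : IsCompact A) (hAo : IsOpen A)
    (p : P) (hpd : ¬ lt p p) (hpT : p ∈ typeOf Xp A)
    (hmin : ∀ q ∈ typeOf Xp A, lt q p → q = p) :
    (A ∩ Xp p).Finite :=
  compact_open_meets_discrete_min_piece_finitely_general lt Xp hderiv A hAc p hpd hmin
end

section
/- Let P be a finite PO system and {X_p | p ∈ P} a complete P-partition of the Stone space of a Boolean ring R. Every nonzero compact open set A admits a μ(A)-partition: writing F = T(A)_min, A can be partitioned into disjoint trim compact open sets containing exactly one p-trim set for each p ∈ F \ P^d and exactly |A ∩ X_p| p-trim sets for each p ∈ F ∩ P^d. -/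
open scoped Classical

/-!
Every `q ∈ T(A)` lies above a minimal `p ∈ T(A)`, and for minimal `p ∈ P^d` the set `A ∩ X_p`
is finite: an accumulation point of it in `A` would lie in some `X_q` with `q < p`, `q ∈ T(A)`.
Take as seeds all of `A ∩ X_p` for the minimal `p ∈ P^d`, and one point of `A ∩ X_p` for the
other minimal `p`. A point of `X_p` has a neighbourhood inside `⋃_{q ≥ p} X_q`, while each of
its neighbourhoods meets every `X_q` with `q > p`. Partition `A` into compact open pieces, one
per seed `x ∈ X_p`, lying in the interior of `⋃_{q ≥ p} X_q` and avoiding the other seeds: each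
piece contains its seed, so it has type exactly `{q | q ≥ p}`, and for `p ∈ P^d` it meets `X_p`
only in its seed, because `A ∩ X_p` consists of seeds.
-/

open Filter Topology Set

section CompactOpen

variable {X : Type*} [TopologicalSpace X]

theorem exists_isCompact_isOpen_subset [LocallyCompactSpace X] [T2Space X]
    [TotallyDisconnectedSpace X] {U : Set X} {x : X} (hU : IsOpen U) (hx : x ∈ U) :
    ∃ V, IsCompact V ∧ IsOpen V ∧ x ∈ V ∧ V ⊆ U := by
  obtain ⟨K, hK, hxK, hKU⟩ := exists_compact_subset hU hx
  obtain ⟨V, hV, hxV, hVK⟩ :=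
    loc_compact_Haus_tot_disc_of_zero_dim.mem_nhds_iff.1 (isOpen_interior.mem_nhds hxK)
  have hVK : V ⊆ K := hVK.trans interior_subset
  exact ⟨V, hK.of_isClosed_subset hV.1 hVK, hV.2, hxV, hVK.trans hKU⟩

theorem exists_pairwiseDisjoint_refinement [T2Space X] {ι : Type*} (s : Finset ι)
    (W : ι → Set X) (hW : ∀ i ∈ s, IsCompact (W i) ∧ IsOpen (W i)) :
    ∃ D : ι → Set X, (∀ i ∈ s, IsCompact (D i) ∧ IsOpen (D i) ∧ D i ⊆ W i) ∧
      (s : Set ι).PairwiseDisjoint D ∧ ⋃ i ∈ s, D i = ⋃ i ∈ s, W i := by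
  induction s using Finset.induction_on with
  | empty => exact ⟨W, by simp, by simp, rfl⟩
  | insert a s ha ih =>
    obtain ⟨D, hD, hDdisj, hDunion⟩ := ih fun i hi => hW i (Finset.mem_insert_of_mem hi)
    obtain ⟨hWac, hWao⟩ := hW a (Finset.mem_insert_self a s)
    have hUc : IsCompact (⋃ i ∈ s, W i) :=
      s.isCompact_biUnion fun i hi => (hW i (Finset.mem_insert_of_mem hi)).1
    have hUo : IsOpen (⋃ i ∈ s, W i) :=
      isOpen_biUnion fun i hi => (hW i (Finset.mem_insert_of_mem hi)).2
    have hDa : Disjoint (W a \ ⋃ i ∈ s, W i) (⋃ i ∈ s, D i) :=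
      hDunion ▸ disjoint_sdiff_left
    have hupd : EqOn (Function.update D a (W a \ ⋃ i ∈ s, W i)) D s :=
      fun i hi => Function.update_of_ne (ne_of_mem_of_not_mem hi ha) _ _
    refine ⟨Function.update D a (W a \ ⋃ i ∈ s, W i), ?_, ?_, ?_⟩
    · intro i hi
      rcases eq_or_ne i a with rfl | hia
      · rw [Function.update_self]
        exact ⟨hWac.diff hUo, hWao.sdiff hUc.isClosed, sdiff_subset⟩
      · rw [Function.update_of_ne hia]
        exact hD i ((Finset.mem_insert.1 hi).resolve_left hia)
    · rw [Finset.coe_insert]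
      refine (hDdisj.mono_on fun i hi => (hupd hi).le).insert fun j hj _ => ?_
      rw [Function.update_self, hupd hj]
      exact hDa.mono_right (subset_biUnion_of_mem (u := D) hj)
    · have hupd' : ⋃ i ∈ s, Function.update D a (W a \ ⋃ i ∈ s, W i) i = ⋃ i ∈ s, D i :=
        iUnion₂_congr fun i hi => hupd hi
      rw [Finset.set_biUnion_insert, Finset.set_biUnion_insert, Function.update_self, hupd',
        hDunion, sdiff_union_self]

theorem IsCompact.exists_partition_subordinate [LocallyCompactSpace X] [T2Space X]
    [TotallyDisconnectedSpace X] {K : Set X} (hKc : IsCompact K) (hKo : IsOpen K)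
    {ι : Type*} (s : Finset ι) (U : ι → Set X) (hU : ∀ i ∈ s, IsOpen (U i))
    (hKU : K ⊆ ⋃ i ∈ s, U i) :
    ∃ D : ι → Set X, (∀ i ∈ s, IsCompact (D i) ∧ IsOpen (D i) ∧ D i ⊆ U i) ∧
      (s : Set ι).PairwiseDisjoint D ∧ ⋃ i ∈ s, D i = K := by
  have hlocal : ∀ y ∈ K, ∃ V, IsCompact V ∧ IsOpen V ∧ y ∈ V ∧ V ⊆ K ∧ ∃ i ∈ s, V ⊆ U i := by
    intro y hy
    obtain ⟨i, hi, hyi⟩ := mem_iUnion₂.1 (hKU hy)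
    obtain ⟨V, hVc, hVo, hyV, hVKU⟩ :=
      exists_isCompact_isOpen_subset (hKo.inter (hU i hi)) ⟨hy, hyi⟩
    exact ⟨V, hVc, hVo, hyV, hVKU.trans inter_subset_left, i, hi, hVKU.trans inter_subset_right⟩
  choose! V hVc hVo hyV hVK hVU using hlocal
  obtain ⟨t, htK, hKt⟩ :=
    hKc.elim_nhds_subcover V fun y hy => (hVo y hy).mem_nhds (hyV y hy)
  let W i := ⋃ y ∈ t.filter (V · ⊆ U i), V y
  have hWunion : ⋃ i ∈ s, W i = K := by
    refine Subset.antisymm (iUnion₂_subset fun i _ => iUnion₂_subset fun y hy =>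
      hVK y (htK y (Finset.mem_filter.1 hy).1)) fun z hz => ?_
    obtain ⟨y, hyt, hzy⟩ := mem_iUnion₂.1 (hKt hz)
    obtain ⟨i, hi, hVyi⟩ := hVU y (htK y hyt)
    exact mem_biUnion hi (mem_biUnion (Finset.mem_filter.2 ⟨hyt, hVyi⟩) hzy)
  obtain ⟨D, hD, hDdisj, hDunion⟩ := exists_pairwiseDisjoint_refinement s W fun i _ =>
    ⟨(t.filter _).isCompact_biUnion fun y hy => hVc y (htK y (Finset.mem_filter.1 hy).1),
      isOpen_biUnion fun y hy => hVo y (htK y (Finset.mem_filter.1 hy).1)⟩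
  refine ⟨D, fun i hi => ?_, hDdisj, hDunion.trans hWunion⟩
  obtain ⟨hDc, hDo, hDW⟩ := hD i hi
  exact ⟨hDc, hDo, hDW.trans (iUnion₂_subset fun y hy => (Finset.mem_filter.1 hy).2)⟩

end CompactOpen

section POSystem

variable {P : Type*} {lt : P → P → Prop}

variable (lt) in
def upSet (p : P) : Set P := {q | lt p q ∨ q = p}

variable (lt) in
def minimals (T : Set P) : Set P := {p | p ∈ T ∧ ∀ q ∈ T, lt q p → q = p}

theorem upSet_subset_upSet (htrans : ∀ a b c, lt a b → lt b c → lt a c) {p q : P}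
    (hq : q ∈ upSet lt p) : upSet lt q ⊆ upSet lt p := by
  rintro r (hqr | rfl)
  · rcases hq with hpq | rfl
    · exact Or.inl (htrans _ _ _ hpq hqr)
    · exact Or.inl hqr
  · exact hq

theorem upSet_injective (hanti : ∀ a b, lt a b → lt b a → a = b) :
    Function.Injective (upSet lt) := by
  intro p q h
  have hp : p ∈ upSet lt q := h ▸ Or.inr rfl
  have hq : q ∈ upSet lt p := h ▸ Or.inr rfl
  rcases hp with hqp | rfl
  · rcases hq with hpq | rfl
    · exact hanti _ _ hpq hqp
    · rfl
  · rfl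

theorem exists_mem_minimals_of_mem [Finite P] (htrans : ∀ a b c, lt a b → lt b c → lt a c)
    (hanti : ∀ a b, lt a b → lt b a → a = b) {T : Set P} {q : P} (hq : q ∈ T) :
    ∃ m ∈ minimals lt T, q ∈ upSet lt m := by
  -- `lt` may relate an element to itself; its irreflexive part is a strict order.
  let slt a b := lt a b ∧ a ≠ b
  have : IsTrans P slt := ⟨fun a b c ⟨hab, hne⟩ ⟨hbc, _⟩ =>
    ⟨htrans _ _ _ hab hbc, by rintro rfl; exact hne (hanti _ _ hab hbc)⟩⟩
  have : Std.Irrefl slt := ⟨fun _ h => h.2 rfl⟩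
  obtain ⟨m, ⟨hmT, hqm⟩, hmin⟩ := (Finite.wellFounded_of_trans_of_irrefl slt).has_min
    {m | m ∈ T ∧ q ∈ upSet lt m} ⟨q, hq, Or.inr rfl⟩
  refine ⟨m, ⟨hmT, fun r hr hrm => ?_⟩, hqm⟩
  by_contra hne
  exact hmin r ⟨hr, upSet_subset_upSet htrans (Or.inl hrm) hqm⟩ ⟨hrm, hne⟩

end POSystem

section Partition

variable {X P : Type*} {lt : P → P → Prop} {Xp : P → Set X}

theorem eq_of_mem_of_mem (hdisj : Pairwise (Function.onFun Disjoint Xp)) {p q : P} {x : X}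
    (hp : x ∈ Xp p) (hq : x ∈ Xp q) : p = q :=
  hdisj.eq (not_disjoint_iff.2 ⟨x, hp, hq⟩)

theorem typeOf_subset_of_subset_biUnion (hdisj : Pairwise (Function.onFun Disjoint Xp))
    {S : Set P} {V : Set X} (hV : V ⊆ ⋃ q ∈ S, Xp q) : typeOf Xp V ⊆ S := by
  rintro r ⟨y, hyV, hyr⟩
  obtain ⟨q, hq, hyq⟩ := mem_iUnion₂.1 (hV hyV)
  exact eq_of_mem_of_mem hdisj hyq hyr ▸ hq

variable [TopologicalSpace X]

theorem upSet_subset_typeOf (hderiv : ∀ p, derivedSet (Xp p) = ⋃ q ∈ {q | lt q p}, Xp q)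
    {p : P} {x : X} {U : Set X} (hx : x ∈ Xp p) (hU : U ∈ 𝓝 x) : upSet lt p ⊆ typeOf Xp U := by
  rintro q (hpq | rfl)
  · have hacc : AccPt x (𝓟 (Xp q)) := mem_derivedSet.1 (hderiv q ▸ mem_biUnion hpq hx)
    obtain ⟨y, hy, -⟩ := accPt_iff_nhds.1 hacc U hU
    exact ⟨y, hy⟩
  · exact ⟨x, mem_of_mem_nhds hU, hx⟩

theorem eventually_mem_imp_eq (hdisj : Pairwise (Function.onFun Disjoint Xp))
    (hderiv : ∀ p, derivedSet (Xp p) = ⋃ q ∈ {q | lt q p}, Xp q) {p q : P} {x : X}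
    (hx : x ∈ Xp p) (hpq : ¬ lt p q) : ∀ᶠ y in 𝓝 x, y ∈ Xp q → y = x := by
  have hacc : ¬ AccPt x (𝓟 (Xp q)) := by
    rw [← mem_derivedSet, hderiv q]
    intro h
    obtain ⟨r, hrq, hxr⟩ := mem_iUnion₂.1 h
    exact hpq (eq_of_mem_of_mem hdisj hxr hx ▸ hrq)
  rw [accPt_iff_frequently, not_frequently] at hacc
  filter_upwards [hacc] with y hy hyq using not_not.1 fun hne => hy ⟨hne, hyq⟩

theorem biUnion_upSet_mem_nhds [Finite P] (hdisj : Pairwise (Function.onFun Disjoint Xp))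
    (hcover : (⋃ p, Xp p) = univ)
    (hderiv : ∀ p, derivedSet (Xp p) = ⋃ q ∈ {q | lt q p}, Xp q) {p : P} {x : X}
    (hx : x ∈ Xp p) : (⋃ q ∈ upSet lt p, Xp q) ∈ 𝓝 x := by
  have hnear : ∀ᶠ y in 𝓝 x, ∀ q ∈ {q | ¬ lt p q}, y ∈ Xp q → y = x :=
    (toFinite _).eventually_all.2 fun q hpq => eventually_mem_imp_eq hdisj hderiv hx hpq
  filter_upwards [hnear] with y hy
  obtain ⟨q, hyq⟩ := mem_iUnion.1 (hcover.symm ▸ mem_univ y : y ∈ ⋃ q, Xp q)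
  by_cases hpq : lt p q
  · exact mem_biUnion (Or.inl hpq) hyq
  · obtain rfl := hy q hpq hyq
    exact mem_biUnion (Or.inr (eq_of_mem_of_mem hdisj hyq hx)) hyq

theorem finite_inter_of_mem_minimals (hderiv : ∀ p, derivedSet (Xp p) = ⋃ q ∈ {q | lt q p}, Xp q)
    {A : Set X} (hAc : IsCompact A) {p : P} (hp : p ∈ minimals lt (typeOf Xp A))
    (hpp : ¬ lt p p) : (A ∩ Xp p).Finite := by
  by_contra hinf
  obtain ⟨x, hxA, hacc⟩ := Set.Infinite.exists_accPt_of_subset_isCompact hinf hAc inter_subset_left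
  have hx : x ∈ derivedSet (Xp p) := hacc.mono (principal_mono.2 inter_subset_right)
  rw [hderiv p] at hx
  obtain ⟨q, hqp, hxq⟩ := mem_iUnion₂.1 hx
  exact hpp (hp.2 q ⟨x, hxA, hxq⟩ hqp ▸ hqp)

theorem exists_seeds_of_mem_minimals
    (hderiv : ∀ p, derivedSet (Xp p) = ⋃ q ∈ {q | lt q p}, Xp q) {A : Set X} (hAc : IsCompact A) :
    ∃ σ : P → Finset X, ∀ p ∈ minimals lt (typeOf Xp A), ↑(σ p) ⊆ A ∩ Xp p ∧ (σ p).Nonempty ∧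
      (lt p p → (σ p).card = 1) ∧ (¬ lt p p → ↑(σ p) = A ∩ Xp p) := by
  have hseed : ∀ p ∈ minimals lt (typeOf Xp A), ∃ s : Finset X, ↑s ⊆ A ∩ Xp p ∧ s.Nonempty ∧
      (lt p p → s.card = 1) ∧ (¬ lt p p → ↑s = A ∩ Xp p) := by
    intro p hp
    by_cases hpp : lt p p
    · obtain ⟨x, hx⟩ := hp.1
      exact ⟨{x}, by simpa using hx, Finset.singleton_nonempty x,
        fun _ => Finset.card_singleton x, fun h => absurd hpp h⟩
    · have hfin := finite_inter_of_mem_minimals hderiv hAc hp hpp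
      exact ⟨hfin.toFinset, by simp, hfin.toFinset_nonempty.2 hp.1, fun h => absurd h hpp,
        fun _ => hfin.coe_toFinset⟩
  choose! σ hσ using hseed
  exact ⟨σ, hσ⟩

end Partition

section Construction

variable {X P : Type*} [TopologicalSpace X] {lt : P → P → Prop} {Xp : P → Set X}

theorem exists_trim_partition_of_seeds [LocallyCompactSpace X] [T2Space X]
    [TotallyDisconnectedSpace X] [Finite P] (htrans : ∀ a b c, lt a b → lt b c → lt a c)
    (hdisj : Pairwise (Function.onFun Disjoint Xp))
    (hderiv : ∀ p, derivedSet (Xp p) = ⋃ q ∈ {q | lt q p}, Xp q)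
    {A : Set X} (hAc : IsCompact A) (hAo : IsOpen A) (π : X → P) (hπ : ∀ x, x ∈ Xp (π x))
    (S : Finset X) (hSA : ↑S ⊆ A) (hbelow : ∀ z ∈ A, ∃ x ∈ S, π z ∈ upSet lt (π x))
    (hfull : ∀ x ∈ S, ¬ lt (π x) (π x) → A ∩ Xp (π x) ⊆ S) :
    ∃ D : X → Set X, (S : Set X).PairwiseDisjoint D ∧ ⋃ x ∈ S, D x = A ∧
      ∀ x ∈ S, x ∈ D x ∧ IsTrim lt Xp (π x) (D x) := by
  have hcover : (⋃ p, Xp p) = univ := iUnion_eq_univ_iff.2 fun x => ⟨π x, hπ x⟩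
  have hint : ∀ z, z ∈ interior (⋃ q ∈ upSet lt (π z), Xp q) := fun z =>
    mem_interior_iff_mem_nhds.2 (biUnion_upSet_mem_nhds hdisj hcover hderiv (hπ z))
  let N x := interior (⋃ q ∈ upSet lt (π x), Xp q) \ ↑(S.erase x)
  have hAN : A ⊆ ⋃ x ∈ S, N x := by
    intro z hz
    by_cases hzS : z ∈ S
    · exact mem_biUnion hzS ⟨hint z, by simp⟩
    · obtain ⟨x, hx, hzx⟩ := hbelow z hz
      refine mem_biUnion hx ⟨interior_mono ?_ (hint z), fun h => hzS (Finset.mem_of_mem_erase h)⟩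
      exact biUnion_subset_biUnion_left (upSet_subset_upSet htrans hzx)
  obtain ⟨D, hD, hDdisj, hDunion⟩ := hAc.exists_partition_subordinate hAo S N
    (fun x _ => isOpen_interior.sdiff (S.erase x).finite_toSet.isClosed) hAN
  have hDA : ∀ x ∈ S, D x ⊆ A := fun x hx => hDunion ▸ subset_biUnion_of_mem (u := D) hx
  have hnotD : ∀ x ∈ S, ∀ y ∈ S, y ≠ x → y ∉ D x := fun x hx y hy hyx hyD =>
    ((hD x hx).2.2 hyD).2 (Finset.mem_erase.2 ⟨hyx, hy⟩)
  have hxD : ∀ x ∈ S, x ∈ D x := by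
    intro x hx
    obtain ⟨y, hy, hxy⟩ := mem_iUnion₂.1 (hDunion ▸ hSA hx)
    obtain rfl : y = x := by_contra fun hne => hnotD y hy x hx (Ne.symm hne) hxy
    exact hxy
  refine ⟨D, hDdisj, hDunion, fun x hx => ⟨hxD x hx, (hD x hx).1, (hD x hx).2.1, ?_, ?_⟩⟩
  · exact Subset.antisymm
      (typeOf_subset_of_subset_biUnion hdisj
        ((hD x hx).2.2.trans (sdiff_subset.trans interior_subset)))
      (upSet_subset_typeOf hderiv (hπ x) ((hD x hx).2.1.mem_nhds (hxD x hx)))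
  · refine fun hpp => ⟨x, ⟨hxD x hx, hπ x⟩, fun z ⟨hzD, hzp⟩ => ?_⟩
    have hzS : z ∈ S := hfull x hx hpp ⟨hDA x hx hzD, hzp⟩
    exact by_contra fun hne => hnotD x hx z hzS hne hzD

theorem exists_finset_of_trim_partition (hanti : ∀ a b, lt a b → lt b a → a = b) {A : Set X}
    (π : X → P) (S : Finset X) (D : X → Set X) (hDdisj : (S : Set X).PairwiseDisjoint D)
    (hDunion : ⋃ x ∈ S, D x = A) (hD : ∀ x ∈ S, x ∈ D x ∧ IsTrim lt Xp (π x) (D x)) :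
    ∃ 𝒞 : Finset (Set X), (𝒞 : Set (Set X)).PairwiseDisjoint id ∧ ⋃₀ (𝒞 : Set (Set X)) = A ∧
      (∀ B ∈ 𝒞, ∃ p, IsTrim lt Xp p B) ∧
      ∀ p, (𝒞.filter (IsTrim lt Xp p)).card = (S.filter (π · = p)).card := by
  have hDinj : InjOn D S := fun x hx y hy hxy =>
    hDdisj.elim hx hy (not_disjoint_iff.2 ⟨x, (hD x hx).1, hxy ▸ (hD x hx).1⟩)
  refine ⟨S.image D, ?_, ?_, ?_, fun p => ?_⟩
  · rw [Finset.coe_image, hDinj.pairwiseDisjoint_image]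
    exact hDdisj
  · rw [Finset.coe_image, sUnion_image]
    exact hDunion
  · simp only [Finset.mem_image]
    rintro _ ⟨x, hx, rfl⟩
    exact ⟨π x, (hD x hx).2⟩
  · rw [Finset.filter_image, Finset.card_image_of_injOn (hDinj.mono (Finset.filter_subset _ _))]
    refine congrArg _ (Finset.filter_congr fun x hx => ⟨fun h => ?_, ?_⟩)
    · exact upSet_injective hanti ((hD x hx).2.2.2.1.symm.trans h.2.2.1)
    · rintro rfl
      exact (hD x hx).2

theorem exists_trim_partition [LocallyCompactSpace X] [T2Space X]
    [TotallyDisconnectedSpace X] [Finite P] (htrans : ∀ a b c, lt a b → lt b c → lt a c)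
    (hanti : ∀ a b, lt a b → lt b a → a = b) (hdisj : Pairwise (Function.onFun Disjoint Xp))
    (hcover : (⋃ p, Xp p) = univ)
    (hderiv : ∀ p, derivedSet (Xp p) = ⋃ q ∈ {q | lt q p}, Xp q)
    {A : Set X} (hAc : IsCompact A) (hAo : IsOpen A) (F : Set P) (σ : P → Finset X)
    (hσ : ∀ p ∈ F, ↑(σ p) ⊆ A ∩ Xp p)
    (hbelow : ∀ q ∈ typeOf Xp A, ∃ p ∈ F, (σ p).Nonempty ∧ q ∈ upSet lt p)
    (hfull : ∀ p ∈ F, ¬ lt p p → A ∩ Xp p ⊆ σ p) :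
    ∃ 𝒞 : Finset (Set X), (𝒞 : Set (Set X)).PairwiseDisjoint id ∧ ⋃₀ (𝒞 : Set (Set X)) = A ∧
      (∀ B ∈ 𝒞, ∃ p, IsTrim lt Xp p B) ∧
      ∀ p ∈ F, (𝒞.filter (IsTrim lt Xp p)).card = (σ p).card := by
  choose π hπ using iUnion_eq_univ_iff.1 hcover
  let S := (toFinite F).toFinset.biUnion σ
  have hS : ∀ x, x ∈ S ↔ π x ∈ F ∧ x ∈ σ (π x) := by
    intro x
    simp only [S, Finset.mem_biUnion, Finite.mem_toFinset]
    refine ⟨fun ⟨p, hp, hx⟩ => ?_, fun h => ⟨π x, h⟩⟩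
    obtain rfl := eq_of_mem_of_mem hdisj (hσ p hp hx).2 (hπ x)
    exact ⟨hp, hx⟩
  have hSA : ↑S ⊆ A := fun x hx => (hσ _ ((hS x).1 hx).1 ((hS x).1 hx).2).1
  have hSbelow : ∀ z ∈ A, ∃ x ∈ S, π z ∈ upSet lt (π x) := by
    intro z hz
    obtain ⟨p, hp, ⟨x, hx⟩, hzp⟩ := hbelow (π z) ⟨z, hz, hπ z⟩
    obtain rfl := eq_of_mem_of_mem hdisj (hσ p hp hx).2 (hπ x)
    exact ⟨x, (hS x).2 ⟨hp, hx⟩, hzp⟩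
  have hSfull : ∀ x ∈ S, ¬ lt (π x) (π x) → A ∩ Xp (π x) ⊆ S := by
    intro x hx hpp y hy
    have hyσ := hfull _ ((hS x).1 hx).1 hpp hy
    have hxy : π x = π y := eq_of_mem_of_mem hdisj hy.2 (hπ y)
    exact (hS y).2 ⟨hxy ▸ ((hS x).1 hx).1, hxy ▸ hyσ⟩
  obtain ⟨D, hDdisj, hDunion, hD⟩ := exists_trim_partition_of_seeds htrans hdisj hderiv hAc hAo
    π hπ S hSA hSbelow hSfull
  obtain ⟨𝒞, h𝒞disj, h𝒞union, h𝒞trim, h𝒞card⟩ :=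
    exists_finset_of_trim_partition hanti π S D hDdisj hDunion hD
  refine ⟨𝒞, h𝒞disj, h𝒞union, h𝒞trim, fun p hp => ?_⟩
  rw [h𝒞card p]
  congr 1
  ext x
  simp only [Finset.mem_filter, hS]
  refine ⟨fun ⟨⟨_, hx⟩, hxp⟩ => hxp ▸ hx, fun hx => ?_⟩
  obtain rfl := eq_of_mem_of_mem hdisj (hπ x) (hσ p hp hx).2
  exact ⟨⟨hp, hx⟩, rfl⟩

end Construction

theorem exists_mu_partition_general
    {X P : Type*} [TopologicalSpace X] [LocallyCompactSpace X] [T2Space X]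
    [TotallyDisconnectedSpace X] [Fintype P]
    (lt : P → P → Prop)
    (htrans : ∀ a b c, lt a b → lt b c → lt a c)
    (hanti : ∀ a b, lt a b → lt b a → a = b)
    (Xp : P → Set X)
    (hdisj : Pairwise (Function.onFun Disjoint Xp))
    (hcover : (⋃ p, Xp p) = Set.univ)
    (hderiv : ∀ p, derivedSet (Xp p) = ⋃ q ∈ {q | lt q p}, Xp q)
    (A : Set X) (hAc : IsCompact A) (hAo : IsOpen A) :
    ∃ 𝒞 : Finset (Set X),
      ((𝒞 : Set (Set X)).PairwiseDisjoint id) ∧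
      (⋃₀ (𝒞 : Set (Set X)) = A) ∧
      (∀ B ∈ 𝒞, ∃ p, IsTrim lt Xp p B) ∧
      (∀ p : P, p ∈ typeOf Xp A → (∀ q ∈ typeOf Xp A, lt q p → q = p) →
        ((lt p p → (𝒞.filter (fun B => IsTrim lt Xp p B)).card = 1) ∧
         (¬ lt p p → (𝒞.filter (fun B => IsTrim lt Xp p B)).card = (A ∩ Xp p).ncard))) := by
  obtain ⟨σ, hσ⟩ := exists_seeds_of_mem_minimals (lt := lt) hderiv hAc
  obtain ⟨𝒞, h𝒞disj, h𝒞union, h𝒞trim, h𝒞card⟩ :=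
    exists_trim_partition htrans hanti hdisj hcover hderiv hAc hAo (minimals lt (typeOf Xp A)) σ
      (fun p hp => (hσ p hp).1)
      (fun q hq => by
        obtain ⟨p, hp, hqp⟩ := exists_mem_minimals_of_mem htrans hanti hq
        exact ⟨p, hp, (hσ p hp).2.1, hqp⟩)
      (fun p hp hpp => ((hσ p hp).2.2.2 hpp).ge)
  refine ⟨𝒞, h𝒞disj, h𝒞union, h𝒞trim, fun p hpT hpmin => ?_⟩
  have hp : p ∈ minimals lt (typeOf Xp A) := ⟨hpT, hpmin⟩
  rw [h𝒞card p hp]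
  exact ⟨(hσ p hp).2.2.1, fun hpp => by rw [← (hσ p hp).2.2.2 hpp, ncard_coe_finset]⟩

/-- For a complete `P`-partition of the Stone space of a Boolean ring, `P` a finite PO
system: every nonempty compact open `A` admits a `μ(A)`-partition, i.e. a partition into
disjoint trim sets containing exactly one `p`-trim set for each minimal `p ∈ T(A)` with
`p < p`, and exactly `|A ∩ X_p|` `p`-trim sets for each minimal `p ∈ T(A)` with `p ≮ p`. -/
theorem exists_mu_partition
    {X P : Type*} [TopologicalSpace X] [LocallyCompactSpace X] [T2Space X]
    [TotallyDisconnectedSpace X] [SecondCountableTopology X] [Fintype P]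
    (lt : P → P → Prop)
    (htrans : ∀ a b c, lt a b → lt b c → lt a c)
    (hanti : ∀ a b, lt a b → lt b a → a = b)
    (Xp : P → Set X)
    (hnonempty : ∀ p, (Xp p).Nonempty)
    (hdisj : Pairwise (Function.onFun Disjoint Xp))
    (hcover : (⋃ p, Xp p) = Set.univ)
    (hderiv : ∀ p, derivedSet (Xp p) = ⋃ q ∈ {q | lt q p}, Xp q)
    (A : Set X) (hAc : IsCompact A) (hAo : IsOpen A) (hAne : A.Nonempty) :
    ∃ 𝒞 : Finset (Set X),
      ((𝒞 : Set (Set X)).PairwiseDisjoint id) ∧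
      (⋃₀ (𝒞 : Set (Set X)) = A) ∧
      (∀ B ∈ 𝒞, ∃ p, IsTrim lt Xp p B) ∧
      (∀ p : P, p ∈ typeOf Xp A → (∀ q ∈ typeOf Xp A, lt q p → q = p) →
        ((lt p p → (𝒞.filter (fun B => IsTrim lt Xp p B)).card = 1) ∧
         (¬ lt p p → (𝒞.filter (fun B => IsTrim lt Xp p B)).card = (A ∩ Xp p).ncard))) :=
  exists_mu_partition_general lt htrans hanti Xp hdisj hcover hderiv A hAc hAo
end

section
/- Let W be a second countable Stone space (locally compact, Hausdorff, totally disconnected) and C a nonempty closed subset of W. Let D be the Cantor set, x₀ ∈ D, and X = (W × {x₀}) ∪ (C × D) ⊆ W × D. Then X is closed in W × D, the map α : W → X, y ↦ (y, x₀) is a homeomorphism onto the closed subset W × {x₀} of X, and setting Y = X \ (W × {x₀}), one has that the closure of Y in X equals C × D, the closure of Y meets W × {x₀} exactly in C × {x₀}, and Y has no isolated points. -/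
/-! The set `Y` is `C × (D \ {x₀})`. The Cantor space is perfect (changing the `n`-th coordinate
of `x` gives points converging to `x`), so `D \ {x₀}` is dense and, being open, crowded; both
properties pass to the product with `C`. -/

open Filter Topology Set

instance Pi.perfectSpace {ι : Type*} [Infinite ι] {X : ι → Type*}
    [∀ i, TopologicalSpace (X i)] [∀ i, Nontrivial (X i)] : PerfectSpace (∀ i, X i) := by
  classical
  refine perfectSpace_iff_forall_not_isolated.mpr fun x => ?_
  choose y hy using fun i => exists_ne (x i)
  have htendsto : Tendsto (fun n => Function.update x n (y n)) cofinite (𝓝 x) :=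
    tendsto_pi_nhds.mpr fun k => tendsto_const_nhds.congr' <|
      (eventually_cofinite_ne k).mono fun n hn => (Function.update_of_ne hn.symm _ _).symm
  rw [← mem_closure_iff_nhdsWithin_neBot]
  exact mem_closure_of_tendsto htendsto <| Eventually.of_forall fun n h =>
    hy n (by simpa using congrFun h n)

theorem Preperfect.prod_of_right {α β : Type*} [TopologicalSpace α] [TopologicalSpace β]
    (s : Set α) {t : Set β} (ht : Preperfect t) : Preperfect (s ×ˢ t) := by
  rw [preperfect_iff_nhds] at ht ⊢
  rintro ⟨a, b⟩ ⟨ha, hb⟩ U hU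
  obtain ⟨V, hV, T, hT, hVT⟩ := mem_nhds_prod_iff.mp hU
  obtain ⟨c, ⟨hcT, hct⟩, hcb⟩ := ht b hb T hT
  exact ⟨(a, c), ⟨hVT ⟨mem_of_mem_nhds hV, hcT⟩, ha, hct⟩, fun h => hcb (congrArg Prod.snd h)⟩

theorem pierce_lemma_crowded_case_general
    {W : Type*} [TopologicalSpace W]
    (C : Set W) (hCcl : IsClosed C) (x₀ : ℕ → Bool) :
    ∀ Xs Y : Set (W × (ℕ → Bool)),
      Xs = (Set.univ ×ˢ ({x₀} : Set (ℕ → Bool))) ∪ (C ×ˢ Set.univ) →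
      Y = Xs \ (Set.univ ×ˢ ({x₀} : Set (ℕ → Bool))) →
      IsClosed Xs ∧
      Topology.IsClosedEmbedding (fun y : W => (y, x₀)) ∧
      Set.range (fun y : W => (y, x₀)) = Set.univ ×ˢ ({x₀} : Set (ℕ → Bool)) ∧
      closure Y = C ×ˢ (Set.univ : Set (ℕ → Bool)) ∧
      closure Y ∩ (Set.univ ×ˢ ({x₀} : Set (ℕ → Bool))) = C ×ˢ ({x₀} : Set (ℕ → Bool)) ∧
      Y ⊆ derivedSet Y := by
  rintro Xs Y rfl rfl
  have hY : (univ ×ˢ {x₀} ∪ C ×ˢ univ) \ univ ×ˢ {x₀} = C ×ˢ {x₀}ᶜ := by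
    ext ⟨a, b⟩
    simp only [Set.mem_sdiff, mem_union, mem_prod, mem_univ, mem_singleton_iff, mem_compl_iff,
      true_and, and_true]
    tauto
  have hrange : range (fun y : W => (y, x₀)) = univ ×ˢ {x₀} := by
    rw [prod_singleton, image_univ]
  have hclosure : closure (C ×ˢ {x₀}ᶜ) = C ×ˢ univ := by
    rw [closure_prod_eq, hCcl.closure_eq, (dense_compl_singleton x₀).closure_eq]
  rw [hY, hclosure, prod_inter_prod, univ_inter, inter_univ]
  refine ⟨(isClosed_univ.prod isClosed_singleton).union (hCcl.prod isClosed_univ),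
    ⟨isEmbedding_prodMkLeft x₀, hrange ▸ isClosed_univ.prod isClosed_singleton⟩, hrange, rfl,
    rfl, ?_⟩
  exact preperfect_iff_subset_derivedSet.mp (isOpen_compl_singleton.preperfect.prod_of_right C)

/-- Pierce's extension lemma, crowded case (with Cantor set `D = ℕ → Bool`):
given a second countable Stone space `W`, a nonempty closed `C ⊆ W` and `x₀ ∈ D`, set
`X = (W × {x₀}) ∪ (C × D)`. Then `X` is closed in `W × D`, `α : y ↦ (y, x₀)` is a
homeomorphism onto the closed subset `W × {x₀}` of `X`, and `Y = X \ (W × {x₀})`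
satisfies: `closure Y = C × D`, `closure Y ∩ (W × {x₀}) = C × {x₀}`, and `Y` has no
isolated points. -/
theorem pierce_lemma_crowded_case
    {W : Type*} [TopologicalSpace W] [LocallyCompactSpace W] [T2Space W]
    [TotallyDisconnectedSpace W] [SecondCountableTopology W]
    (C : Set W) (hCcl : IsClosed C) (hCne : C.Nonempty) (x₀ : ℕ → Bool) :
    ∀ Xs Y : Set (W × (ℕ → Bool)),
      Xs = (Set.univ ×ˢ ({x₀} : Set (ℕ → Bool))) ∪ (C ×ˢ Set.univ) →
      Y = Xs \ (Set.univ ×ˢ ({x₀} : Set (ℕ → Bool))) →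
      IsClosed Xs ∧
      Topology.IsClosedEmbedding (fun y : W => (y, x₀)) ∧
      Set.range (fun y : W => (y, x₀)) = Set.univ ×ˢ ({x₀} : Set (ℕ → Bool)) ∧
      closure Y = C ×ˢ (Set.univ : Set (ℕ → Bool)) ∧
      closure Y ∩ (Set.univ ×ˢ ({x₀} : Set (ℕ → Bool))) = C ×ˢ ({x₀} : Set (ℕ → Bool)) ∧
      Y ⊆ derivedSet Y :=
  pierce_lemma_crowded_case_general C hCcl x₀
end

section
/- Let X be a topological space, C_1, ..., C_n closed subsets of X, and suppose the closure subalgebra C of the powerset of X generated by {C_1,...,C_n} (together with X) is finite and each atom of C has finitely many isolated points of X within it whose set of limit points is empty, satisfying (A^d)' = ∅ for each atom A. Then the sub-TBA D of 2^X generated by {C_1,...,C_n} is finite, and every atom of D is either contained in its own derived set (crowded) or disjoint from its derived set. -/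
/-!
Let `I` be the union of the isolated points of the atoms of `C`. It is finite, `I' = ∅`, and it
contains the isolated points of every member of `C`. The sets that differ from a member of `C`
only inside `I` then form a finite Boolean algebra, and it is closed under `'`: changing a set
inside `I` does not change its derived set, and `S₀'` differs from `closure S₀` only by isolated
points of `S₀`. Hence it contains `D`, so `D` is finite. For an atom `B` of `D`, the member
`B ∩ B'` of `D` is either `∅` or `B`.
-/

/-- `C` is a Boolean subalgebra of the powerset of `X` (as a collection of sets). -/
def IsBoolSubalgOfSets {X : Type*} (C : Set (Set X)) : Prop :=
  Set.univ ∈ C ∧ (∀ A ∈ C, Aᶜ ∈ C) ∧ ∀ A B : Set X, A ∈ C → B ∈ C → A ∪ B ∈ C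

/-- `A` is an atom of the collection `C` of subsets of `X`. -/
def IsAtomOfSets {X : Type*} (C : Set (Set X)) (A : Set X) : Prop :=
  A ∈ C ∧ A ≠ ∅ ∧ ∀ B ∈ C, B ⊆ A → B = ∅ ∨ B = A

open Set
open scoped symmDiff

namespace IsBoolSubalgOfSets

variable {X : Type*} {C : Set (Set X)}

lemma inter_mem (hC : IsBoolSubalgOfSets C) {A B : Set X} (hA : A ∈ C) (hB : B ∈ C) :
    A ∩ B ∈ C := by
  simpa [compl_union] using hC.2.1 _ (hC.2.2 _ _ (hC.2.1 _ hA) (hC.2.1 _ hB))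

lemma diff_mem (hC : IsBoolSubalgOfSets C) {A B : Set X} (hA : A ∈ C) (hB : B ∈ C) :
    A \ B ∈ C :=
  hC.inter_mem hA (hC.2.1 _ hB)

lemma sInter_mem (hC : IsBoolSubalgOfSets C) {S : Set (Set X)} (hS : S.Finite) (h : S ⊆ C) :
    ⋂₀ S ∈ C := by
  induction S, hS using Set.Finite.induction_on with
  | empty => simpa using hC.1
  | insert _ _ ih =>
    rw [sInter_insert]
    exact hC.inter_mem (h (mem_insert _ _)) (ih ((subset_insert _ _).trans h))

/-- The atom through `x` is the intersection of all members of `C` containing `x`. -/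
lemma exists_atom_mem_subset (hC : IsBoolSubalgOfSets C) (hfin : C.Finite) {S : Set X}
    (hS : S ∈ C) {x : X} (hx : x ∈ S) : ∃ A, IsAtomOfSets C A ∧ x ∈ A ∧ A ⊆ S := by
  set A := ⋂₀ {B ∈ C | x ∈ B}
  have hAC : A ∈ C := hC.sInter_mem (hfin.subset fun _ hB => hB.1) fun _ hB => hB.1
  have hxA : x ∈ A := fun _ hB => hB.2
  have hmin : ∀ B ∈ C, x ∈ B → A ⊆ B := fun B hB hxB => sInter_subset_of_mem ⟨hB, hxB⟩
  refine ⟨A, ⟨hAC, nonempty_iff_ne_empty.mp ⟨x, hxA⟩, fun B hB hBA => ?_⟩, hxA, hmin S hS hx⟩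
  by_cases hxB : x ∈ B
  · exact Or.inr (hBA.antisymm (hmin B hB hxB))
  · have hAB : A ⊆ A \ B := hmin _ (hC.diff_mem hAC hB) ⟨hxA, hxB⟩
    exact Or.inl (eq_empty_of_forall_notMem fun y hy => (hAB (hBA hy)).2 hy)

end IsBoolSubalgOfSets

section Topology

variable {X : Type*} [TopologicalSpace X]

lemma derivedSet_empty : derivedSet (∅ : Set X) = ∅ :=
  subset_empty_iff.mp <| by simpa using derivedSet_subset_closure (∅ : Set X)

lemma Set.Finite.derivedSet_biUnion {ι : Type*} {s : Set ι} (hs : s.Finite) (f : ι → Set X) :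
    derivedSet (⋃ i ∈ s, f i) = ⋃ i ∈ s, derivedSet (f i) := by
  induction s, hs using Set.Finite.induction_on with
  | empty => simpa using derivedSet_empty
  | insert _ _ ih => rw [biUnion_insert, biUnion_insert, derivedSet_union, ih]

lemma derivedSet_eq_of_symmDiff_subset {I S T : Set X} (hI : derivedSet I = ∅)
    (h : S ∆ T ⊆ I) : derivedSet S = derivedSet T := by
  have key : ∀ {S T : Set X}, S ∆ T ⊆ I → derivedSet S ⊆ derivedSet T := fun {S T} h => by
    have hST : S ⊆ T ∪ I := fun x hx => by
      by_cases hxT : x ∈ T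
      · exact Or.inl hxT
      · exact Or.inr (h (Or.inl ⟨hx, hxT⟩))
    simpa [derivedSet_union, hI] using derivedSet_mono _ _ hST
  exact (key h).antisymm (key (symmDiff_comm S T ▸ h))

lemma IsBoolSubalgOfSets.diff_derivedSet_subset_biUnion_atoms {C : Set (Set X)}
    (hC : IsBoolSubalgOfSets C) (hfin : C.Finite) {S : Set X} (hS : S ∈ C) :
    S \ derivedSet S ⊆ ⋃ A ∈ {A | IsAtomOfSets C A}, A \ derivedSet A := by
  rintro x ⟨hxS, hx⟩
  obtain ⟨A, hA, hxA, hAS⟩ := hC.exists_atom_mem_subset hfin hS hxS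
  exact mem_biUnion hA ⟨hxA, fun h => hx (derivedSet_mono _ _ hAS h)⟩

lemma IsAtomOfSets.subset_derivedSet_or_inter_derivedSet_eq_empty {D : Set (Set X)}
    (hD : IsBoolSubalgOfSets D) (hDder : ∀ A ∈ D, derivedSet A ∈ D) {B : Set X}
    (hB : IsAtomOfSets D B) : B ⊆ derivedSet B ∨ B ∩ derivedSet B = ∅ := by
  rcases hB.2.2 _ (hD.inter_mem hB.1 (hDder B hB.1)) inter_subset_left with h | h
  · exact Or.inr h
  · exact Or.inl (inter_eq_left.mp h)

end Topology

section Perturbations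

variable {X : Type*}

def perturbations (C : Set (Set X)) (I : Set X) : Set (Set X) :=
  {S | ∃ S₀ ∈ C, S ∆ S₀ ⊆ I}

variable {C : Set (Set X)} {I : Set X}

lemma mem_perturbations_of_mem {S : Set X} (hS : S ∈ C) : S ∈ perturbations C I :=
  ⟨S, hS, by simp⟩

lemma IsBoolSubalgOfSets.perturbations (hC : IsBoolSubalgOfSets C) :
    IsBoolSubalgOfSets (perturbations C I) := by
  refine ⟨mem_perturbations_of_mem hC.1, ?_, ?_⟩
  · rintro S ⟨S₀, hS₀, h⟩
    exact ⟨S₀ᶜ, hC.2.1 _ hS₀, by rwa [compl_symmDiff_compl]⟩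
  · rintro S T ⟨S₀, hS₀, hS⟩ ⟨T₀, hT₀, hT⟩
    refine ⟨S₀ ∪ T₀, hC.2.2 _ _ hS₀ hT₀, fun x hx => ?_⟩
    have hx' : x ∈ S ∆ S₀ ∪ T ∆ T₀ := by
      revert hx; simp only [mem_symmDiff, mem_union]; tauto
    exact hx'.elim (fun h => hS h) (fun h => hT h)

lemma Set.Finite.perturbations (hC : C.Finite) (hI : I.Finite) :
    (perturbations C I).Finite := by
  refine (hC.image2 (fun S₀ J => S₀ ∆ J) hI.finite_subsets).subset ?_
  rintro S ⟨S₀, hS₀, h⟩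
  exact ⟨S₀, hS₀, S ∆ S₀, h, by simp only [symmDiff_comm S, symmDiff_symmDiff_cancel_left]⟩

lemma derivedSet_mem_perturbations [TopologicalSpace X] (hCcl : ∀ A ∈ C, closure A ∈ C)
    (hI : derivedSet I = ∅) (hiso : ∀ S ∈ C, S \ derivedSet S ⊆ I) {S : Set X}
    (hS : S ∈ perturbations C I) : derivedSet S ∈ perturbations C I := by
  obtain ⟨S₀, hS₀, h⟩ := hS
  refine ⟨closure S₀, hCcl _ hS₀, ?_⟩
  rw [derivedSet_eq_of_symmDiff_subset hI h, closure_eq_self_union_derivedSet]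
  intro x hx
  have hx' : x ∈ S₀ \ derivedSet S₀ := by
    revert hx; simp only [mem_symmDiff, mem_union, mem_sdiff]; tauto
  exact hiso S₀ hS₀ hx'

end Perturbations

theorem subTBA_of_closed_sets_finite_and_atoms_dichotomy_general
    {X : Type*} [TopologicalSpace X] {n : ℕ} (Cs : Fin n → Set X)
    (C D : Set (Set X))
    (hCalg : IsBoolSubalgOfSets C) (hCcl : ∀ A ∈ C, closure A ∈ C)
    (hCsIn : ∀ i, Cs i ∈ C)
    (hCfin : C.Finite)
    (hAtomIso : ∀ A : Set X, IsAtomOfSets C A →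
      (A \ derivedSet A).Finite ∧ derivedSet (A \ derivedSet A) = ∅)
    (hDalg : IsBoolSubalgOfSets D) (hDder : ∀ A ∈ D, derivedSet A ∈ D)
    (hDgen : ∀ E : Set (Set X), IsBoolSubalgOfSets E → (∀ A ∈ E, derivedSet A ∈ E) →
      (∀ i, Cs i ∈ E) → D ⊆ E) :
    D.Finite ∧
    ∀ B : Set X, IsAtomOfSets D B →
      B ⊆ derivedSet B ∨ B ∩ derivedSet B = ∅ := by
  set I := ⋃ A ∈ {A | IsAtomOfSets C A}, A \ derivedSet A
  have hatoms : {A | IsAtomOfSets C A}.Finite := hCfin.subset fun _ hA => hA.1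
  have hIfin : I.Finite := hatoms.biUnion fun A hA => (hAtomIso A hA).1
  have hI : derivedSet I = ∅ := by
    rw [hatoms.derivedSet_biUnion]
    simp only [iUnion_eq_empty]
    exact fun A hA => (hAtomIso A hA).2
  have hDE : D ⊆ perturbations C I :=
    hDgen _ hCalg.perturbations
      (fun _ => derivedSet_mem_perturbations hCcl hI
        fun _ hS => hCalg.diff_derivedSet_subset_biUnion_atoms hCfin hS)
      fun i => mem_perturbations_of_mem (hCsIn i)
  exact ⟨(hCfin.perturbations hIfin).subset hDE,
    fun _ hB => hB.subset_derivedSet_or_inter_derivedSet_eq_empty hDalg hDder⟩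

/-- If `C₁, …, Cₙ` are closed subsets of `X` whose generated closure subalgebra `C` is
finite, and each atom `A` of `C` has finitely many isolated points with
`(A^d)' = ∅`, then the sub-TBA `D` of `2^X` generated by the `Cᵢ` is finite and every
atom of `D` is either crowded or disjoint from its derived set. -/
theorem subTBA_of_closed_sets_finite_and_atoms_dichotomy
    {X : Type*} [TopologicalSpace X] {n : ℕ} (Cs : Fin n → Set X)
    (hclosed : ∀ i, IsClosed (Cs i))
    (C D : Set (Set X))
    (hCalg : IsBoolSubalgOfSets C) (hCcl : ∀ A ∈ C, closure A ∈ C)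
    (hCsIn : ∀ i, Cs i ∈ C)
    (hCgen : ∀ E : Set (Set X), IsBoolSubalgOfSets E → (∀ A ∈ E, closure A ∈ E) →
      (∀ i, Cs i ∈ E) → C ⊆ E)
    (hCfin : C.Finite)
    (hAtomIso : ∀ A : Set X, IsAtomOfSets C A →
      (A \ derivedSet A).Finite ∧ derivedSet (A \ derivedSet A) = ∅)
    (hDalg : IsBoolSubalgOfSets D) (hDder : ∀ A ∈ D, derivedSet A ∈ D)
    (hCsInD : ∀ i, Cs i ∈ D)
    (hDgen : ∀ E : Set (Set X), IsBoolSubalgOfSets E → (∀ A ∈ E, derivedSet A ∈ E) →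
      (∀ i, Cs i ∈ E) → D ⊆ E) :
    D.Finite ∧
    ∀ B : Set X, IsAtomOfSets D B →
      B ⊆ derivedSet B ∨ B ∩ derivedSet B = ∅ :=
  subTBA_of_closed_sets_finite_and_atoms_dichotomy_general Cs C D hCalg hCcl hCsIn hCfin hAtomIso
    hDalg hDder hDgen
end

section
/- Vaught's criterion: Let R and S be countable Boolean algebras and ~ a relation between elements of R and S such that (i) 1_R ~ 1_S; (ii) A ~ 0_S implies A = 0_R and 0_R ~ B implies B = 0_S; (iii) whenever A ~ B and B = B₁ ⊔ B₂ is a disjoint decomposition in S, there is a disjoint decomposition A = A₁ ⊔ A₂ in R with A₁ ~ B₁ and A₂ ~ B₂, and symmetrically. Then R and S are isomorphic as Boolean algebras, via an isomorphism α such that every A ∈ R is a finite disjoint union A = A₁ ⊔ ... ⊔ A_n with A_i ~ A_i α for each i. -/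
/-!
Back and forth. Call a finite family of pairs `(Aᵢ, Bᵢ)` with `Aᵢ ~ Bᵢ`, pairwise disjoint on
both sides and joining to `⊤` on both sides, a matched partition. Since the pieces are
disjoint and `Aᵢ = ⊥ ↔ Bᵢ = ⊥`, the pairs `(⨆_{i ∈ I} Aᵢ, ⨆_{i ∈ I} Bᵢ)` over subfamilies `I`
form the graph of a partial order isomorphism. Splitting every piece along some `a ∈ R` by
condition (iii) gives a matched partition whose graph is larger and contains `a` in its domain,
and symmetrically for `b ∈ S`. As `R` and `S` are countable, the Rasiowa–Sikorski lemma yields a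
directed family of matched partitions whose graphs together form the graph of an order
isomorphism `α`; an element `A` is then a join of pieces `Aᵢ` of one partition, and
`α Aᵢ = Bᵢ ~ Aᵢ`.
-/

open Finset

lemma exists_orderIso_of_forall_le_iff {α β : Type*} [PartialOrder α] [PartialOrder β]
    (G : α → β → Prop) (hdom : ∀ a, ∃ b, G a b) (hcod : ∀ b, ∃ a, G a b)
    (hle : ∀ a a' b b', G a b → G a' b' → (a ≤ a' ↔ b ≤ b')) :
    ∃ e : α ≃o β, ∀ a, G a (e a) := by
  choose f hf using hdom
  let e : α ↪o β := OrderEmbedding.ofMapLEIff f fun a a' ↦ (hle a a' _ _ (hf a) (hf a')).symm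
  refine ⟨OrderIso.ofSurjective e fun b ↦ ?_, hf⟩
  obtain ⟨a, ha⟩ := hcod b
  exact ⟨a, le_antisymm ((hle a a _ _ (hf a) ha).1 le_rfl) ((hle a a _ _ ha (hf a)).1 le_rfl)⟩

lemma Finset.exists_fin_sup_eq {ι α : Type*} [Lattice α] [OrderBot α] (t : Finset ι) (g : ι → α)
    (ht : (t : Set ι).PairwiseDisjoint g) :
    ∃ (n : ℕ) (f : Fin n → α), (∀ i j, i ≠ j → Disjoint (f i) (f j)) ∧
      t.sup g = univ.sup f ∧ ∀ i, ∃ p ∈ t, f i = g p := by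
  refine ⟨t.card, fun i ↦ g (t.equivFin.symm i), fun i j hij ↦ ?_, ?_, fun i ↦ ⟨_, coe_mem _, rfl⟩⟩
  · exact ht (coe_mem _) (coe_mem _) (by simpa [Subtype.ext_iff] using hij)
  · rw [← sup_attach, ← univ_eq_attach, ← univ_map_equiv_to_embedding t.equivFin.symm, sup_map]
    rfl

section

variable {R S : Type*}

structure IsMatchedPartition [SemilatticeSup R] [OrderBot R] [SemilatticeSup S] [OrderBot S]
    (r : R → S → Prop) (A : R) (B : S) (s : Finset (R × S)) : Prop where
  rel : ∀ p ∈ s, r p.1 p.2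
  fst_eq_bot_iff : ∀ p ∈ s, p.1 = ⊥ ↔ p.2 = ⊥
  pairwise_disjoint : (s : Set (R × S)).Pairwise fun p q ↦ Disjoint p.1 q.1 ∧ Disjoint p.2 q.2
  sup_fst : s.sup Prod.fst = A
  sup_snd : s.sup Prod.snd = B

/-- For a matched partition this is the graph of a partial order isomorphism between `R` and
`S`. -/
def subfamilySups [SemilatticeSup R] [OrderBot R] [SemilatticeSup S] [OrderBot S]
    (s : Finset (R × S)) : Set (R × S) :=
  {x | ∃ t ⊆ s, (t.sup Prod.fst, t.sup Prod.snd) = x}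

def prodSwap (s : Finset (R × S)) : Finset (S × R) :=
  s.map (Equiv.prodComm R S).toEmbedding

@[simp] lemma mem_prodSwap {s : Finset (R × S)} {p : S × R} : p ∈ prodSwap s ↔ p.swap ∈ s := by
  simp [prodSwap]

lemma sup_fst_prodSwap [SemilatticeSup S] [OrderBot S] (s : Finset (R × S)) :
    (prodSwap s).sup Prod.fst = s.sup Prod.snd :=
  sup_map _ _ _

lemma sup_snd_prodSwap [SemilatticeSup R] [OrderBot R] (s : Finset (R × S)) :
    (prodSwap s).sup Prod.snd = s.sup Prod.fst :=
  sup_map _ _ _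

section SemilatticeSup

variable [SemilatticeSup R] [OrderBot R] [SemilatticeSup S] [OrderBot S]
  {r : R → S → Prop} {A : R} {B : S} {s : Finset (R × S)}

lemma mem_subfamilySups_prodSwap {a : R} {b : S} :
    (b, a) ∈ subfamilySups (prodSwap s) ↔ (a, b) ∈ subfamilySups s := by
  constructor
  · rintro ⟨u, hu, h⟩
    obtain ⟨t, hts, rfl⟩ := subset_map_iff.1 hu
    refine ⟨t, hts, ?_⟩
    rw [← sup_fst_prodSwap, ← sup_snd_prodSwap]
    exact congrArg Prod.swap h
  · rintro ⟨t, hts, h⟩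
    refine ⟨prodSwap t, map_subset_map.2 hts, ?_⟩
    rw [sup_fst_prodSwap, sup_snd_prodSwap]
    exact congrArg Prod.swap h

lemma IsMatchedPartition.prodSwap (hs : IsMatchedPartition r A B s) :
    IsMatchedPartition (flip r) B A (prodSwap s) where
  rel p hp := hs.rel _ (mem_prodSwap.1 hp)
  fst_eq_bot_iff p hp := (hs.fst_eq_bot_iff _ (mem_prodSwap.1 hp)).symm
  pairwise_disjoint p hp q hq hpq :=
    (hs.pairwise_disjoint (mem_prodSwap.1 hp) (mem_prodSwap.1 hq) (by simpa using hpq)).symm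
  sup_fst := (sup_fst_prodSwap s).trans hs.sup_snd
  sup_snd := (sup_snd_prodSwap s).trans hs.sup_fst

lemma isMatchedPartition_singleton (hbot : ∀ a b, r a b → (a = ⊥ ↔ b = ⊥)) {a : R} {b : S}
    (h : r a b) : IsMatchedPartition r a b {(a, b)} where
  rel := by simpa using h
  fst_eq_bot_iff := by simpa using hbot a b h
  pairwise_disjoint := by simp
  sup_fst := sup_singleton
  sup_snd := sup_singleton

lemma isMatchedPartition_pair [DecidableEq R] [DecidableEq S]
    (hbot : ∀ a b, r a b → (a = ⊥ ↔ b = ⊥)) {a₁ a₂ : R} {b₁ b₂ : S}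
    (ha : Disjoint a₁ a₂) (hb : Disjoint b₁ b₂) (h₁ : r a₁ b₁) (h₂ : r a₂ b₂) :
    IsMatchedPartition r (a₁ ⊔ a₂) (b₁ ⊔ b₂) {(a₁, b₁), (a₂, b₂)} where
  rel := by simp [h₁, h₂]
  fst_eq_bot_iff := by simp [hbot _ _ h₁, hbot _ _ h₂]
  pairwise_disjoint := by
    rw [coe_pair]
    exact Set.pairwise_pair.2 fun _ ↦ ⟨⟨ha, hb⟩, ⟨ha.symm, hb.symm⟩⟩
  sup_fst := by simp
  sup_snd := by simp

lemma IsMatchedPartition.biUnion [DecidableEq R] [DecidableEq S] (hs : IsMatchedPartition r A B s)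
    {c : R × S → Finset (R × S)} (hc : ∀ p ∈ s, IsMatchedPartition r p.1 p.2 (c p)) :
    IsMatchedPartition r A B (s.biUnion c) where
  rel q hq := by
    obtain ⟨p, hp, hq⟩ := mem_biUnion.1 hq
    exact (hc p hp).rel q hq
  fst_eq_bot_iff q hq := by
    obtain ⟨p, hp, hq⟩ := mem_biUnion.1 hq
    exact (hc p hp).fst_eq_bot_iff q hq
  pairwise_disjoint x hx y hy hxy := by
    obtain ⟨p, hp, hx⟩ := mem_biUnion.1 hx
    obtain ⟨q, hq, hy⟩ := mem_biUnion.1 hy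
    obtain rfl | hpq := eq_or_ne p q
    · exact (hc p hp).pairwise_disjoint hx hy hxy
    have hx_le : x.1 ≤ p.1 ∧ x.2 ≤ p.2 :=
      ⟨(hc p hp).sup_fst ▸ le_sup hx, (hc p hp).sup_snd ▸ le_sup hx⟩
    have hy_le : y.1 ≤ q.1 ∧ y.2 ≤ q.2 :=
      ⟨(hc q hq).sup_fst ▸ le_sup hy, (hc q hq).sup_snd ▸ le_sup hy⟩
    have hdisj := hs.pairwise_disjoint hp hq hpq
    exact ⟨hdisj.1.mono hx_le.1 hy_le.1, hdisj.2.mono hx_le.2 hy_le.2⟩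
  sup_fst := by
    rw [sup_biUnion, ← hs.sup_fst]
    exact sup_congr rfl fun p hp ↦ (hc p hp).sup_fst
  sup_snd := by
    rw [sup_biUnion, ← hs.sup_snd]
    exact sup_congr rfl fun p hp ↦ (hc p hp).sup_snd

lemma subfamilySups_subset_subfamilySups_biUnion [DecidableEq R] [DecidableEq S]
    {c : R × S → Finset (R × S)}
    (hc : ∀ p ∈ s, (c p).sup Prod.fst = p.1 ∧ (c p).sup Prod.snd = p.2) :
    subfamilySups s ⊆ subfamilySups (s.biUnion c) := by
  rintro x ⟨t, hts, rfl⟩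
  refine ⟨t.biUnion c, biUnion_subset_biUnion_of_subset_left c hts, ?_⟩
  rw [sup_biUnion, sup_biUnion]
  congr 1 <;> exact sup_congr rfl fun p hp ↦ by simp [hc p (hts hp)]

end SemilatticeSup

section DistribLattice

variable [DistribLattice R] [OrderBot R] [DistribLattice S] [OrderBot S]
  {r : R → S → Prop} {A : R} {B : S} {s : Finset (R × S)}

lemma IsMatchedPartition.le_of_mem_subfamilySups (hs : IsMatchedPartition r A B s)
    {x y : R × S} (hx : x ∈ subfamilySups s) (hy : y ∈ subfamilySups s) (hxy : x.1 ≤ y.1) :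
    x.2 ≤ y.2 := by
  obtain ⟨t, hts, rfl⟩ := hx
  obtain ⟨u, hus, rfl⟩ := hy
  refine Finset.sup_le fun p hp ↦ ?_
  by_cases hpu : p ∈ u
  · exact le_sup hpu
  have hdisj : Disjoint p.1 (u.sup Prod.fst) := Finset.disjoint_sup_right.2 fun q hq ↦
    (hs.pairwise_disjoint (hts hp) (hus hq) (ne_of_mem_of_not_mem hq hpu).symm).1
  have hp₁ : p.1 = ⊥ := hdisj.eq_bot_of_le ((le_sup hp).trans hxy)
  simp [(hs.fst_eq_bot_iff p (hts hp)).1 hp₁]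

lemma IsMatchedPartition.le_iff_le_of_mem_subfamilySups (hs : IsMatchedPartition r A B s)
    {x y : R × S} (hx : x ∈ subfamilySups s) (hy : y ∈ subfamilySups s) :
    x.1 ≤ y.1 ↔ x.2 ≤ y.2 :=
  ⟨hs.le_of_mem_subfamilySups hx hy, hs.prodSwap.le_of_mem_subfamilySups
    (x := x.swap) (y := y.swap) (mem_subfamilySups_prodSwap.2 hx)
    (mem_subfamilySups_prodSwap.2 hy)⟩

lemma exists_mem_subfamilySups_of_le_or_disjoint [OrderTop R] (hs : s.sup Prod.fst = ⊤) {a : R}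
    (ha : ∀ p ∈ s, p.1 ≤ a ∨ Disjoint p.1 a) : ∃ b, (a, b) ∈ subfamilySups s := by
  classical
  refine ⟨_, s.filter (·.1 ≤ a), filter_subset _ _,
    Prod.ext (le_antisymm (Finset.sup_le fun p hp ↦ (mem_filter.1 hp).2) ?_) rfl⟩
  calc a = s.sup fun p ↦ a ⊓ p.1 := by rw [← sup_inf_distrib_left, hs, inf_top_eq]
    _ ≤ _ := Finset.sup_le fun p hp ↦ (ha p hp).elim
        (fun h ↦ inf_le_right.trans (le_sup (f := Prod.fst) (mem_filter.2 ⟨hp, h⟩)))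
        (fun h ↦ by simp [h.symm.eq_bot])

end DistribLattice

structure MatchedPartition [DistribLattice R] [BoundedOrder R] [DistribLattice S]
    [BoundedOrder S] (r : R → S → Prop) where
  pieces : Finset (R × S)
  isMatchedPartition : IsMatchedPartition r ⊤ ⊤ pieces

namespace MatchedPartition

section DistribLattice

variable [DistribLattice R] [BoundedOrder R] [DistribLattice S] [BoundedOrder S]
  {r : R → S → Prop}

instance : Preorder (MatchedPartition r) :=
  Preorder.lift fun P ↦ subfamilySups P.pieces

def swap (P : MatchedPartition r) : MatchedPartition (flip r) :=
  ⟨prodSwap P.pieces, P.isMatchedPartition.prodSwap⟩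

end DistribLattice

variable [BooleanAlgebra R] [BooleanAlgebra S] {r : R → S → Prop}

/-- Splitting every piece along `a` and matching the halves by the splitting hypothesis makes
`a` a union of pieces. -/
lemma exists_le_and_mem_subfamilySups_fst (hbot : ∀ a b, r a b → (a = ⊥ ↔ b = ⊥))
    (hsplit : ∀ (B : S) (A₁ A₂ : R), Disjoint A₁ A₂ → r (A₁ ⊔ A₂) B →
      ∃ B₁ B₂ : S, Disjoint B₁ B₂ ∧ B = B₁ ⊔ B₂ ∧ r A₁ B₁ ∧ r A₂ B₂)
    (P : MatchedPartition r) (a : R) :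
    ∃ Q, P ≤ Q ∧ ∃ b, (a, b) ∈ subfamilySups Q.pieces := by
  classical
  have hpiece : ∀ p ∈ P.pieces, ∃ c : Finset (R × S),
      IsMatchedPartition r p.1 p.2 c ∧ ∀ q ∈ c, q.1 ≤ a ∨ Disjoint q.1 a := by
    intro p hp
    have hdisj : Disjoint (p.1 ⊓ a) (p.1 \ a) := disjoint_inf_sdiff
    obtain ⟨b₁, b₂, hb, hp₂, h₁, h₂⟩ :=
      hsplit p.2 _ _ hdisj (by rw [sup_inf_sdiff]; exact P.isMatchedPartition.rel p hp)
    refine ⟨{(p.1 ⊓ a, b₁), (p.1 \ a, b₂)}, ?_, ?_⟩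
    · simpa only [sup_inf_sdiff, ← hp₂] using isMatchedPartition_pair hbot hdisj hb h₁ h₂
    · simp [disjoint_sdiff_self_left]
  choose! c hc hca using hpiece
  have hQ := P.isMatchedPartition.biUnion hc
  refine ⟨⟨_, hQ⟩, subfamilySups_subset_subfamilySups_biUnion fun p hp ↦
    ⟨(hc p hp).sup_fst, (hc p hp).sup_snd⟩,
    exists_mem_subfamilySups_of_le_or_disjoint hQ.sup_fst ?_⟩
  intro q hq
  obtain ⟨p, hp, hq⟩ := mem_biUnion.1 hq
  exact hca p hp q hq

lemma exists_le_and_mem_subfamilySups_snd (hbot : ∀ a b, r a b → (a = ⊥ ↔ b = ⊥))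
    (hsplit : ∀ (A : R) (B₁ B₂ : S), Disjoint B₁ B₂ → r A (B₁ ⊔ B₂) →
      ∃ A₁ A₂ : R, Disjoint A₁ A₂ ∧ A = A₁ ⊔ A₂ ∧ r A₁ B₁ ∧ r A₂ B₂)
    (P : MatchedPartition r) (b : S) :
    ∃ Q, P ≤ Q ∧ ∃ a, (a, b) ∈ subfamilySups Q.pieces := by
  obtain ⟨Q, hPQ, a, ha⟩ := P.swap.exists_le_and_mem_subfamilySups_fst
    (fun b a h ↦ (hbot a b h).symm) hsplit b
  refine ⟨(Q.swap : MatchedPartition r), fun x hx ↦ ?_, a, mem_subfamilySups_prodSwap.2 ha⟩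
  exact mem_subfamilySups_prodSwap.2 (hPQ (mem_subfamilySups_prodSwap.2 hx))

lemma exists_orderIso [Countable R] [Countable S] (hbot : ∀ a b, r a b → (a = ⊥ ↔ b = ⊥))
    (htop : r ⊤ ⊤)
    (hsplitS : ∀ (A : R) (B₁ B₂ : S), Disjoint B₁ B₂ → r A (B₁ ⊔ B₂) →
      ∃ A₁ A₂ : R, Disjoint A₁ A₂ ∧ A = A₁ ⊔ A₂ ∧ r A₁ B₁ ∧ r A₂ B₂)
    (hsplitR : ∀ (B : S) (A₁ A₂ : R), Disjoint A₁ A₂ → r (A₁ ⊔ A₂) B →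
      ∃ B₁ B₂ : S, Disjoint B₁ B₂ ∧ B = B₁ ⊔ B₂ ∧ r A₁ B₁ ∧ r A₂ B₂) :
    ∃ α : R ≃o S, ∀ A, ∃ P : MatchedPartition r,
      (A, α A) ∈ subfamilySups P.pieces ∧ ∀ p ∈ P.pieces, α p.1 = p.2 := by
  let P₀ : MatchedPartition r := ⟨{(⊤, ⊤)}, isMatchedPartition_singleton hbot htop⟩
  let _ : Encodable (R ⊕ S) := Encodable.ofCountable _
  let 𝒟 : R ⊕ S → Order.Cofinal (MatchedPartition r) := Sum.elim
    (fun a ↦ ⟨{Q | ∃ b, (a, b) ∈ subfamilySups Q.pieces}, fun P ↦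
      (P.exists_le_and_mem_subfamilySups_fst hbot hsplitR a).imp fun _ h ↦ ⟨h.2, h.1⟩⟩)
    (fun b ↦ ⟨{Q | ∃ a, (a, b) ∈ subfamilySups Q.pieces}, fun P ↦
      (P.exists_le_and_mem_subfamilySups_snd hbot hsplitS b).imp fun _ h ↦ ⟨h.2, h.1⟩⟩)
  let I := Order.idealOfCofinals P₀ 𝒟
  let G (a : R) (b : S) : Prop := ∃ P ∈ I, (a, b) ∈ subfamilySups P.pieces
  have hle : ∀ a a' b b', G a b → G a' b' → (a ≤ a' ↔ b ≤ b') := by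
    rintro a a' b b' ⟨P, hP, hab⟩ ⟨P', hP', hab'⟩
    obtain ⟨Q, -, hPQ, hP'Q⟩ := I.directed P hP P' hP'
    exact Q.isMatchedPartition.le_iff_le_of_mem_subfamilySups (hPQ hab) (hP'Q hab')
  obtain ⟨α, hα⟩ := exists_orderIso_of_forall_le_iff G
    (fun a ↦ by
      obtain ⟨P, ⟨b, hb⟩, hP⟩ := Order.cofinal_meets_idealOfCofinals P₀ 𝒟 (Sum.inl a)
      exact ⟨b, P, hP, hb⟩)
    (fun b ↦ by
      obtain ⟨P, ⟨a, ha⟩, hP⟩ := Order.cofinal_meets_idealOfCofinals P₀ 𝒟 (Sum.inr b)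
      exact ⟨a, P, hP, ha⟩)
    hle
  refine ⟨α, fun A ↦ ?_⟩
  obtain ⟨P, hP, hA⟩ := hα A
  refine ⟨P, hA, fun p hp ↦ ?_⟩
  have hG : G p.1 p.2 := ⟨P, hP, {p}, singleton_subset_iff.2 hp, by simp⟩
  exact le_antisymm ((hle _ _ _ _ (hα p.1) hG).1 le_rfl) ((hle _ _ _ _ hG (hα p.1)).1 le_rfl)

end MatchedPartition

end

/-- Vaught's criterion: if `R`, `S` are countable Boolean algebras and `r` is a relation
between them with `⊤ r ⊤`, related-to-`⊥` elements are `⊥`, and disjoint decompositions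
can be matched back and forth, then `R ≅ S` via an isomorphism `α` such that every
`A ∈ R` is a finite disjoint union of elements `Aᵢ` with `Aᵢ r (α Aᵢ)`. -/
theorem vaught_criterion
    {R S : Type*} [BooleanAlgebra R] [BooleanAlgebra S] [Countable R] [Countable S]
    (r : R → S → Prop)
    (htop : r ⊤ ⊤)
    (hbotR : ∀ A : R, r A ⊥ → A = ⊥)
    (hbotS : ∀ B : S, r ⊥ B → B = ⊥)
    (hsplitS : ∀ (A : R) (B₁ B₂ : S), Disjoint B₁ B₂ → r A (B₁ ⊔ B₂) →
      ∃ A₁ A₂ : R, Disjoint A₁ A₂ ∧ A = A₁ ⊔ A₂ ∧ r A₁ B₁ ∧ r A₂ B₂)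
    (hsplitR : ∀ (B : S) (A₁ A₂ : R), Disjoint A₁ A₂ → r (A₁ ⊔ A₂) B →
      ∃ B₁ B₂ : S, Disjoint B₁ B₂ ∧ B = B₁ ⊔ B₂ ∧ r A₁ B₁ ∧ r A₂ B₂) :
    ∃ α : R ≃o S, ∀ A : R, ∃ (n : ℕ) (f : Fin n → R),
      (∀ i j, i ≠ j → Disjoint (f i) (f j)) ∧
      A = (Finset.univ : Finset (Fin n)).sup f ∧
      ∀ i, r (f i) (α (f i)) := by
  have hbot : ∀ a b, r a b → (a = ⊥ ↔ b = ⊥) := fun a b h ↦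
    ⟨fun ha ↦ hbotS b (ha ▸ h), fun hb ↦ hbotR a (hb ▸ h)⟩
  obtain ⟨α, hα⟩ := MatchedPartition.exists_orderIso hbot htop hsplitS hsplitR
  refine ⟨α, fun A ↦ ?_⟩
  obtain ⟨P, ⟨t, hts, hA⟩, hpiece⟩ := hα A
  obtain ⟨n, f, hdisj, hsup, hf⟩ := t.exists_fin_sup_eq Prod.fst fun p hp q hq hpq ↦
    (P.isMatchedPartition.pairwise_disjoint (hts hp) (hts hq) hpq).1
  refine ⟨n, f, hdisj, (congrArg Prod.fst hA).symm.trans hsup, fun i ↦ ?_⟩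
  obtain ⟨p, hp, hfi⟩ := hf i
  rw [hfi, hpiece p (hts hp)]
  exact P.isMatchedPartition.rel p (hts hp)
end

section
/- For each finite extended PO system [P, L, f] there exists a second countable Stone space X admitting a complete [P,L,f]-partition, i.e. a complete P-partition {X_p} with closure of X_p compact iff p ∈ L, and |X_p| = f(p) for p ∈ L_min ∩ P^d. -/
/-!
Points of `X` are the branches, finite or infinite, of the tree of `lt`-chains
`[(p₀, n₀), …, (pₖ, nₖ)]` in `P × ℕ` whose root satisfies `n₀ < f p₀` when `p₀ ∈ L`; a branch lies
in `X_p` when its labels end, or stabilise, at `p` (the latter only happens when `p < p`).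
A branch is coded by its sequence of nodes in the one-point compactification of the discrete set
of chains, so that the children `r ++ [(p, n)]` of a node `r` converge, as `n → ∞`, to the branch
ending at `r`: this gives `X_p' = ⋃_{q < p} X_q`. For `p ∈ L` only finitely many roots lie below
`p`, so `X_p` lies in finitely many compact cylinders, while for `p ∉ L` the roots `[(p, n)]`
escape to the empty branch. For a minimal `p ∈ L` with `¬ p < p`, `X_p` consists of `f p` roots.
-/

/-- A bundled topological space. -/
structure TopPkg where
  carrier : Type
  [str : TopologicalSpace carrier]

attribute [instance] TopPkg.str

open Set Filter Topology
open scoped OnePoint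

namespace OnePoint

variable {X : Type*} [TopologicalSpace X] [DiscreteTopology X]

theorem isOpen_singleton_coe (x : X) : IsOpen ({(x : OnePoint X)} : Set (OnePoint X)) := by
  simpa using isOpen_image_coe.2 (isOpen_discrete {x})

theorem tendsto_coe_cofinite : Tendsto ((↑) : X → OnePoint X) cofinite (𝓝 ∞) := by
  simpa [coclosedCompact_eq_cocompact, cocompact_eq_cofinite] using tendsto_coe_infty (X := X)

theorem finite_compl_of_isOpen {U : Set (OnePoint X)} (hU : IsOpen U) (h : ∞ ∈ U) :
    Uᶜ.Finite := by
  refine (isCompact_iff_finite.1 ((isOpen_iff_of_mem h).1 hU).2 |>.image (↑)).subset ?_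
  intro y hy
  induction y using OnePoint.rec with
  | infty => exact absurd h hy
  | coe y => exact ⟨y, hy, rfl⟩

instance [Countable X] : Countable (OnePoint X) :=
  inferInstanceAs (Countable (Option X))

instance [Countable X] : SecondCountableTopology (OnePoint X) := by
  let B : Set (Set (OnePoint X)) :=
    range (fun x : X ↦ {(x : OnePoint X)}) ∪ {U | IsOpen U ∧ Uᶜ.Finite}
  have hB : TopologicalSpace.IsTopologicalBasis B := by
    refine TopologicalSpace.isTopologicalBasis_of_isOpen_of_nhds ?_ fun y U hy hU ↦ ?_
    · rintro U (⟨x, rfl⟩ | hU)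
      exacts [isOpen_singleton_coe x, hU.1]
    induction y using OnePoint.rec with
    | infty => exact ⟨U, Or.inr ⟨hU, finite_compl_of_isOpen hU hy⟩, hy, subset_rfl⟩
    | coe x => exact ⟨{↑x}, Or.inl ⟨x, rfl⟩, rfl, singleton_subset_iff.2 hy⟩
  refine hB.secondCountableTopology ((countable_range _).union ?_)
  exact (Set.Countable.ofPred_finite.image compl).mono fun U hU ↦
    (mem_image _ _ _).2 ⟨Uᶜ, hU.2, compl_compl U⟩

end OnePoint

theorem mem_derivedSet_of_tendsto {X : Type*} [TopologicalSpace X] {C : Set X} {x : X}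
    {y : ℕ → X} (hy : Tendsto y atTop (𝓝 x)) (hC : ∀ n, y n ∈ C) (hne : ∀ n, y n ≠ x) :
    x ∈ derivedSet C :=
  accPt_iff_frequently.2 (hy.frequently (Frequently.of_forall fun n ↦ ⟨hne n, hC n⟩))

section BranchSpace

variable {P : Type*}

section Tree

variable (lt : P → P → Prop) (L : Set P) (f : P → ℕ+)

def IsNode (l : List (P × ℕ)) : Prop :=
  l ≠ [] ∧ l.Pairwise (fun a b ↦ lt a.1 b.1) ∧ ∀ a ∈ l.head?, a.2 < (f a.1 : ℕ) ∨ a.1 ∉ L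

/-- `g i` is the node of depth `i` of a branch, or `∞` once the branch has ended. -/
def IsPath (g : ℕ → OnePoint (List (P × ℕ))) : Prop :=
  ∀ j (l : List (P × ℕ)), g j = l →
    IsNode lt L f l ∧ l.length = j + 1 ∧ ∀ i ≤ j, g i = ↑(l.take (i + 1))

abbrev BranchSpace : Type _ :=
  {g : ℕ → OnePoint (List (P × ℕ)) // IsPath lt L f g ∧ g 0 ≠ ∞}

def finiteBranch (l : List (P × ℕ)) (i : ℕ) : OnePoint (List (P × ℕ)) :=
  if i < l.length then ↑(l.take (i + 1)) else ∞

def nodeLabel (o : OnePoint (List (P × ℕ))) : Option P :=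
  o.elim none fun l ↦ l.getLast?.map Prod.fst

/-- The labels of the branch `g` end with, or stabilise at, `p`. -/
def HasLabel (g : ℕ → OnePoint (List (P × ℕ))) (p : P) : Prop :=
  ∃ k, nodeLabel (g k) = some p ∧ ∀ i ≥ k, ∀ q ∈ nodeLabel (g i), q = p

def piece (p : P) : Set (BranchSpace lt L f) := {x | HasLabel x.1 p}

end Tree

variable {lt : P → P → Prop} {L : Set P} {f : P → ℕ+}

theorem IsNode.take {l : List (P × ℕ)} (hl : IsNode lt L f l) {n : ℕ} (hn : n ≠ 0) :
    IsNode lt L f (l.take n) := by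
  refine ⟨?_, hl.2.1.sublist (List.take_sublist n l), ?_⟩
  · simpa [hn] using hl.1
  · simpa [List.head?_take, hn] using hl.2.2

theorem IsNode.append_singleton (htrans : ∀ a b c, lt a b → lt b c → lt a c)
    {r : List (P × ℕ)} (hr : IsNode lt L f r) {a : P × ℕ} (ha : lt (r.getLast hr.1).1 a.1) :
    IsNode lt L f (r ++ [a]) := by
  refine ⟨by simp, List.pairwise_append.2 ⟨hr.2.1, List.pairwise_singleton _ _, ?_⟩, ?_⟩
  · intro b hb c hc
    rw [List.mem_singleton.1 hc]
    rw [← List.dropLast_concat_getLast hr.1, List.mem_append, List.mem_singleton] at hb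
    rcases hb with hb | rfl
    · exact htrans _ _ _ (hr.2.1.rel_dropLast_getLast hb) ha
    · exact ha
  · simpa [List.head?_append_of_ne_nil _ hr.1] using hr.2.2

theorem nodeLabel_coe {l : List (P × ℕ)} (hl : l ≠ []) :
    nodeLabel (l : OnePoint (List (P × ℕ))) = some (l.getLast hl).1 := by
  simp [nodeLabel, List.getLast?_eq_some_getLast hl]

@[simp] theorem nodeLabel_infty : nodeLabel (∞ : OnePoint (List (P × ℕ))) = none := rfl

namespace IsPath

variable {g : ℕ → OnePoint (List (P × ℕ))} (hg : IsPath lt L f g)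
include hg

theorem apply_of_le {j : ℕ} {l : List (P × ℕ)} (hj : g j = l) {i : ℕ} (hij : i ≤ j) :
    g i = ↑(l.take (i + 1)) :=
  (hg j l hj).2.2 i hij

theorem eq_infty_of_le {i j : ℕ} (hi : g i = ∞) (hij : i ≤ j) : g j = ∞ := by
  induction hj : g j using OnePoint.rec with
  | infty => rfl
  | coe l => exact absurd (hg.apply_of_le hj hij) (by simp [hi])

theorem nodeLabel_eq {j : ℕ} {l : List (P × ℕ)} (hj : g j = l) {i : ℕ} (hij : i ≤ j) :
    nodeLabel (g i) = some (l[i]'(by have := (hg j l hj).2.1; omega)).1 := by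
  have hlen := (hg j l hj).2.1
  have hne : l.take (i + 1) ≠ [] := by simp [← List.length_pos_iff]; omega
  rw [hg.apply_of_le hj hij, nodeLabel_coe hne, List.getLast_eq_getElem]
  simp only [List.length_take, List.getElem_take]
  congr 3
  omega

theorem lt_of_nodeLabel {i j : ℕ} (hij : i < j) {p q : P} (hi : nodeLabel (g i) = some p)
    (hj : nodeLabel (g j) = some q) : lt p q := by
  induction hgj : g j using OnePoint.rec with
  | infty => simp [hgj] at hj
  | coe l =>
    rw [hg.nodeLabel_eq hgj hij.le, Option.some_inj] at hi
    rw [hg.nodeLabel_eq hgj le_rfl, Option.some_inj] at hj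
    subst hi hj
    exact List.pairwise_iff_getElem.1 (hg j l hgj).1.2.1 _ _ _ _ hij

theorem exists_nodeLabel {i : ℕ} (hi : g i ≠ ∞) : ∃ q, nodeLabel (g i) = some q := by
  obtain ⟨l, hl⟩ := OnePoint.ne_infty_iff_exists.1 hi
  exact ⟨_, hg.nodeLabel_eq hl.symm le_rfl⟩

theorem eq_or_lt_of_hasLabel {k : ℕ} {p q : P} (hk : nodeLabel (g k) = some q)
    (hp : HasLabel g p) : q = p ∨ lt q p := by
  obtain ⟨k', hk', hstab⟩ := hp
  rcases le_or_gt k' k with h | h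
  · exact Or.inl (hstab k h q hk)
  · exact Or.inr (hg.lt_of_nodeLabel h hk hk')

theorem lt_of_hasLabel (htrans : ∀ a b c, lt a b → lt b c → lt a c) {k : ℕ} {p q : P}
    (hk : nodeLabel (g k) = some q) (hnext : g (k + 1) ≠ ∞) (hp : HasLabel g p) : lt q p := by
  obtain ⟨q', hq'⟩ := hg.exists_nodeLabel hnext
  have hqq' := hg.lt_of_nodeLabel k.lt_succ_self hk hq'
  rcases hg.eq_or_lt_of_hasLabel hq' hp with rfl | h
  exacts [hqq', htrans _ _ _ hqq' h]

theorem eq_finiteBranch {k : ℕ} {r : List (P × ℕ)} (hk : g k = r) (hk1 : g (k + 1) = ∞) :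
    g = finiteBranch r := by
  have hlen := (hg k r hk).2.1
  funext i
  unfold finiteBranch
  split_ifs with hi
  · exact hg.apply_of_le hk (by omega)
  · exact hg.eq_infty_of_le hk1 (by omega)

theorem eq_finiteBranch_or_forall_ne_infty (h0 : g 0 ≠ ∞) :
    (∃ r, IsNode lt L f r ∧ g = finiteBranch r) ∨ ∀ i, g i ≠ ∞ := by
  by_cases h : ∃ k, g k ≠ ∞ ∧ g (k + 1) = ∞
  · obtain ⟨k, hk, hk1⟩ := h
    obtain ⟨r, hr⟩ := OnePoint.ne_infty_iff_exists.1 hk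
    exact Or.inl ⟨r, (hg k r hr.symm).1, hg.eq_finiteBranch hr.symm hk1⟩
  · push Not at h
    exact Or.inr fun i ↦ Nat.rec h0 h i

end IsPath

theorem HasLabel.unique {g : ℕ → OnePoint (List (P × ℕ))} {p q : P} (hp : HasLabel g p)
    (hq : HasLabel g q) : p = q := by
  obtain ⟨k, hk, hpk⟩ := hp
  obtain ⟨k', hk', hqk'⟩ := hq
  rcases le_total k k' with h | h
  · exact (hpk k' h q hk').symm
  · exact hqk' k h p hk

theorem isPath_finiteBranch {l : List (P × ℕ)} (hl : IsNode lt L f l) :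
    IsPath lt L f (finiteBranch l) := by
  intro j l' hj
  unfold finiteBranch at hj
  split_ifs at hj with hjl
  · obtain rfl := OnePoint.coe_injective hj
    refine ⟨hl.take j.succ_ne_zero, by simp; omega, fun i hi ↦ ?_⟩
    simp [finiteBranch, List.take_take, show i < l.length by omega,
      show min (i + 1) (j + 1) = i + 1 by omega]
  · exact absurd hj (OnePoint.infty_ne_coe _)

theorem finiteBranch_length_sub_one {l : List (P × ℕ)} (hl : l ≠ []) :
    finiteBranch l (l.length - 1) = l := by
  have := List.length_pos_iff.2 hl
  rw [finiteBranch, if_pos (by omega), List.take_of_length_le (by omega)]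

theorem hasLabel_finiteBranch {l : List (P × ℕ)} (hl : l ≠ []) :
    HasLabel (finiteBranch l) (l.getLast hl).1 := by
  have hlen := List.length_pos_iff.2 hl
  refine ⟨l.length - 1, ?_, fun i hi q hq ↦ ?_⟩
  · rw [finiteBranch_length_sub_one hl, nodeLabel_coe hl]
  · rw [finiteBranch] at hq
    split_ifs at hq with h
    · rw [List.take_of_length_le (by omega), nodeLabel_coe hl] at hq
      exact (Option.mem_some_iff.1 hq).symm
    · simp at hq

def ofNode {l : List (P × ℕ)} (hl : IsNode lt L f l) : BranchSpace lt L f :=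
  ⟨finiteBranch l, isPath_finiteBranch hl, by simp [finiteBranch, List.length_pos_iff.2 hl.1]⟩

theorem ofNode_mem_piece {l : List (P × ℕ)} (hl : IsNode lt L f l) :
    ofNode hl ∈ piece lt L f (l.getLast hl.1).1 :=
  hasLabel_finiteBranch hl.1

theorem IsPath.exists_hasLabel [Finite P] (hanti : ∀ a b, lt a b → lt b a → a = b)
    {g : ℕ → OnePoint (List (P × ℕ))} (hg : IsPath lt L f g) (h0 : g 0 ≠ ∞) :
    ∃ p, HasLabel g p := by
  rcases hg.eq_finiteBranch_or_forall_ne_infty h0 with ⟨r, hr, rfl⟩ | hinf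
  · exact ⟨_, hasLabel_finiteBranch hr.1⟩
  choose q hq using fun i ↦ hg.exists_nodeLabel (hinf i)
  obtain ⟨p, hp⟩ := Finite.exists_infinite_fiber q
  have hp' : {i | q i = p}.Infinite := Set.infinite_coe_iff.1 hp
  obtain ⟨k, hk⟩ := hp'.nonempty
  refine ⟨p, k, hk ▸ hq k, fun i hi q' hq' ↦ ?_⟩
  rw [hq i, Option.mem_some_iff] at hq'
  subst hq'
  obtain ⟨j, hj, hij⟩ := hp'.exists_gt i
  rcases hi.eq_or_lt with rfl | hki
  · exact hk
  · exact hanti _ _ (hj ▸ hg.lt_of_nodeLabel hij (hq i) (hq j))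
      (hk ▸ hg.lt_of_nodeLabel hki (hq k) (hq i))

theorem IsPath.finiteBranch_apply {g : ℕ → OnePoint (List (P × ℕ))} (hg : IsPath lt L f g)
    {j : ℕ} {l : List (P × ℕ)} (hj : g j = l) {i : ℕ} (hij : i ≤ j) :
    finiteBranch l i = g i := by
  rw [finiteBranch, if_pos (by have := (hg j l hj).2.1; omega), hg.apply_of_le hj hij]

theorem finiteBranch_append_of_ne (r : List (P × ℕ)) (a : P × ℕ) {i : ℕ} (hi : i ≠ r.length) :
    finiteBranch (r ++ [a]) i = finiteBranch r i := by
  unfold finiteBranch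
  rcases lt_or_gt_of_ne hi with h | h
  · simp [h, Nat.lt_succ_of_lt h, List.take_append_of_le_length (show i + 1 ≤ r.length by omega)]
  · simp [show ¬ i < r.length + 1 by omega, show ¬ i < r.length by omega]

theorem BranchSpace.exists_root (x : BranchSpace lt L f) :
    ∃ a : P × ℕ, x.1 0 = ↑[a] ∧ (a.2 < (f a.1 : ℕ) ∨ a.1 ∉ L) := by
  obtain ⟨l, hl⟩ := OnePoint.ne_infty_iff_exists.1 x.2.2
  obtain ⟨hnode, hlen, -⟩ := x.2.1 0 l hl.symm
  obtain ⟨a, rfl⟩ := List.length_eq_one_iff.1 hlen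
  exact ⟨a, hl.symm, hnode.2.2 a rfl⟩

theorem isNode_singleton {a : P × ℕ} (ha : a.2 < (f a.1 : ℕ) ∨ a.1 ∉ L) :
    IsNode lt L f [a] :=
  ⟨List.cons_ne_nil _ _, List.pairwise_singleton _ _, by simpa using ha⟩

theorem nodeLabel_singleton (a : P × ℕ) :
    nodeLabel ((↑[a] : OnePoint (List (P × ℕ)))) = some a.1 := rfl

theorem piece_eq_range (htrans : ∀ a b c, lt a b → lt b c → lt a c)
    (hL : ∀ p ∈ L, ∀ q, lt q p → q ∈ L) {p : P} (hp : p ∈ L)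
    (hmin : ∀ q ∈ L, lt q p → q = p) (hnd : ¬ lt p p) :
    piece lt L f p =
      range fun n : Fin (f p) ↦ ofNode (isNode_singleton (lt := lt) (a := (p, n)) (Or.inl n.2)) :=
    by
  ext x
  constructor
  · intro hx
    obtain ⟨⟨q, n⟩, ha, hroot⟩ := x.exists_root
    have hlab : nodeLabel (x.1 0) = some q := by rw [ha, nodeLabel_singleton]
    obtain rfl : q = p := by
      refine (x.2.1.eq_or_lt_of_hasLabel hlab hx).resolve_right fun h ↦ hnd ?_
      rwa [hmin _ (hL p hp _ h) h] at h
    have hx1 : x.1 (0 + 1) = ∞ := by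
      by_contra hx1
      exact hnd (x.2.1.lt_of_hasLabel htrans hlab hx1 hx)
    refine ⟨⟨n, hroot.resolve_right (not_not.2 hp)⟩, Subtype.ext ?_⟩
    exact (x.2.1.eq_finiteBranch ha hx1).symm
  · rintro ⟨n, rfl⟩
    exact ofNode_mem_piece _

theorem ncard_piece (htrans : ∀ a b c, lt a b → lt b c → lt a c)
    (hL : ∀ p ∈ L, ∀ q, lt q p → q ∈ L) {p : P} (hp : p ∈ L)
    (hmin : ∀ q ∈ L, lt q p → q = p) (hnd : ¬ lt p p) :
    (piece lt L f p).ncard = f p := by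
  rw [piece_eq_range htrans hL hp hmin hnd, ncard_range_of_injective, Nat.card_eq_fintype_card,
    Fintype.card_fin]
  intro m n h
  simpa [ofNode, finiteBranch, Fin.ext_iff] using congrFun (congrArg Subtype.val h) 0

theorem IsPath.tendsto_finiteBranch_append [TopologicalSpace P] {g : ℕ → OnePoint (List (P × ℕ))}
    (hg : IsPath lt L f g) {k : ℕ} {l : ℕ → List (P × ℕ)} (hl : ∀ j, g (k + j) = l j)
    (a : P × ℕ) : Tendsto (fun j ↦ finiteBranch (l j ++ [a])) atTop (𝓝 g) := by
  refine tendsto_pi_nhds.2 fun i ↦ tendsto_atTop_of_eventually_const (i₀ := i) fun j hij ↦ ?_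
  have := (hg _ _ (hl j)).2.1
  rw [finiteBranch_append_of_ne _ _ (by omega), hg.finiteBranch_apply (hl j) (by omega)]

section Topology

/- Mathlib's topology on lists makes `List (P × ℕ)` discrete once `P` is. -/
variable [TopologicalSpace P] [DiscreteTopology P]

theorem isClosed_setOf_isPath : IsClosed {g | IsPath lt L f g} := by
  simp only [IsPath, ofPred_forall]
  refine isClosed_iInter fun j ↦ isClosed_iInter fun l ↦ isClosed_imp ?_ ?_
  · exact (OnePoint.isOpen_singleton_coe l).preimage (continuous_apply (A := fun _ ↦ _) j)
  · simp only [ofPred_and, ofPred_forall]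
    exact isClosed_const.inter (isClosed_const.inter (isClosed_iInter fun i ↦ isClosed_iInter
      fun _ ↦ isClosed_eq (continuous_apply i) continuous_const))

instance : LocallyCompactSpace (BranchSpace lt L f) :=
  IsLocallyClosed.locallyCompactSpace (s := {g | IsPath lt L f g ∧ g 0 ≠ ∞})
    ⟨{g | g 0 ≠ ∞}, {g | IsPath lt L f g}, isOpen_ne_fun (continuous_apply 0) continuous_const,
      isClosed_setOf_isPath, by ext; simp [and_comm]⟩

instance [Countable P] : SecondCountableTopology (BranchSpace lt L f) :=
  inferInstanceAs (SecondCountableTopology {g | IsPath lt L f g ∧ g 0 ≠ ∞})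

theorem isOpen_setOf_apply_eq (k : ℕ) (r : List (P × ℕ)) :
    IsOpen {x : BranchSpace lt L f | x.1 k = r} :=
  (OnePoint.isOpen_singleton_coe r).preimage
    ((continuous_apply (A := fun _ ↦ _) k).comp continuous_subtype_val)

theorem isCompact_setOf_apply_eq (k : ℕ) (r : List (P × ℕ)) :
    IsCompact {x : BranchSpace lt L f | x.1 k = r} := by
  have himage : Subtype.val '' {x : BranchSpace lt L f | x.1 k = r} =
      {g | IsPath lt L f g} ∩ {g | g k = r} := by
    ext g
    constructor
    · rintro ⟨x, hx, rfl⟩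
      exact ⟨x.2.1, hx⟩
    · rintro ⟨hg, hk⟩
      exact ⟨⟨g, hg, by simp [hg.apply_of_le hk (Nat.zero_le k)]⟩, hk, rfl⟩
  rw [Subtype.isCompact_iff, himage]
  exact isClosed_setOf_isPath.isCompact.inter_right (isClosed_eq (continuous_apply k)
    continuous_const)

theorem tendsto_finiteBranch_append (r : List (P × ℕ)) (p : P) :
    Tendsto (fun n : ℕ ↦ finiteBranch (r ++ [(p, n)])) atTop (𝓝 (finiteBranch r)) := by
  refine tendsto_pi_nhds.2 fun i ↦ ?_
  rcases eq_or_ne i r.length with rfl | hi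
  · simp only [finiteBranch, List.length_append, List.length_singleton, Nat.lt_add_one,
      lt_irrefl, if_true, if_false]
    refine OnePoint.tendsto_coe_cofinite.comp ?_
    rw [← Nat.cofinite_eq_atTop]
    refine Function.Injective.tendsto_cofinite fun m n h ↦ ?_
    rw [List.take_of_length_le (by simp), List.take_of_length_le (by simp)] at h
    simpa using h
  · simp only [finiteBranch_append_of_ne r _ hi]
    exact tendsto_const_nhds

theorem mem_derivedSet_piece_of_lt (htrans : ∀ a b c, lt a b → lt b c → lt a c)
    {x : BranchSpace lt L f} {p q : P} (hx : x ∈ piece lt L f q) (hqp : lt q p) :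
    x ∈ derivedSet (piece lt L f p) := by
  rcases x.2.1.eq_finiteBranch_or_forall_ne_infty x.2.2 with ⟨r, hr, hxr⟩ | hinf
  · have hq : (r.getLast hr.1).1 = q := (hasLabel_finiteBranch hr.1).unique (hxr ▸ hx)
    have hchild n : IsNode lt L f (r ++ [(p, n)]) := hr.append_singleton htrans (hq ▸ hqp)
    refine mem_derivedSet_of_tendsto (y := fun n ↦ ofNode (hchild n)) ?_ (fun n ↦ ?_) fun n h ↦ ?_
    · rw [tendsto_subtype_rng, hxr]
      exact tendsto_finiteBranch_append r p
    · simpa using ofNode_mem_piece (hchild n)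
    · have := congrFun (congrArg Subtype.val h) r.length
      simp [ofNode, hxr, finiteBranch] at this
  · -- branch off to `p` from ever deeper nodes of `x`
    obtain ⟨k, hk, hstab⟩ := hx
    choose l hl using fun j ↦ OnePoint.ne_infty_iff_exists.1 (hinf (k + j))
    have hlen j : (l j).length = k + j + 1 := (x.2.1 _ _ (hl j).symm).2.1
    have hchild j : IsNode lt L f (l j ++ [(p, 0)]) := by
      have hlj : IsNode lt L f (l j) := (x.2.1 _ _ (hl j).symm).1
      have hlast : ((l j).getLast hlj.1).1 = q :=
        hstab (k + j) (Nat.le_add_right k j) _ (by rw [← hl j, nodeLabel_coe hlj.1]; rfl)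
      exact hlj.append_singleton htrans (hlast ▸ hqp)
    refine mem_derivedSet_of_tendsto (y := fun j ↦ ofNode (hchild j)) ?_ (fun j ↦ ?_) fun j h ↦ ?_
    · exact tendsto_subtype_rng.2 (x.2.1.tendsto_finiteBranch_append (fun j ↦ (hl j).symm) _)
    · simpa using ofNode_mem_piece (hchild j)
    · have := congrFun (congrArg Subtype.val h) (k + j + 2)
      exact hinf _ (this.symm.trans (if_neg (by simp [hlen])))

theorem lt_of_mem_derivedSet_piece (htrans : ∀ a b c, lt a b → lt b c → lt a c)
    {x : BranchSpace lt L f} {p q : P} (hx : x ∈ piece lt L f q)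
    (hxp : x ∈ derivedSet (piece lt L f p)) : lt q p := by
  rw [mem_derivedSet, accPt_iff_nhds] at hxp
  rcases x.2.1.eq_finiteBranch_or_forall_ne_infty x.2.2 with ⟨r, hr, hxr⟩ | hinf
  · have hxk : x.1 (r.length - 1) = r := by rw [hxr, finiteBranch_length_sub_one hr.1]
    obtain ⟨y, ⟨hyk, hyp⟩, hyx⟩ :=
      hxp _ ((isOpen_setOf_apply_eq (r.length - 1) r).mem_nhds hxk)
    have hq : (r.getLast hr.1).1 = q := (hasLabel_finiteBranch hr.1).unique (hxr ▸ hx)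
    have hy1 : y.1 (r.length - 1 + 1) ≠ ∞ := fun h ↦
      hyx (Subtype.ext ((y.2.1.eq_finiteBranch hyk h).trans hxr.symm))
    refine y.2.1.lt_of_hasLabel htrans ?_ hy1 hyp
    rw [show y.1 _ = _ from hyk, nodeLabel_coe hr.1, hq]
  · obtain ⟨k, hk, -⟩ := id hx
    obtain ⟨r, hr⟩ := OnePoint.ne_infty_iff_exists.1 (hinf k)
    obtain ⟨y, ⟨hyk, hyp⟩, -⟩ := hxp _ ((isOpen_setOf_apply_eq k r).mem_nhds hr.symm)
    have hyk' : nodeLabel (y.1 k) = some q := by rw [show y.1 k = x.1 k from hyk.trans hr, hk]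
    rcases y.2.1.eq_or_lt_of_hasLabel hyk' hyp with rfl | h
    · -- an infinite branch labelled `q` forces `q < q`
      exact x.2.1.lt_of_hasLabel htrans hk (hinf _) hx
    · exact h

theorem derivedSet_piece [Finite P] (htrans : ∀ a b c, lt a b → lt b c → lt a c)
    (hanti : ∀ a b, lt a b → lt b a → a = b) (p : P) :
    derivedSet (piece lt L f p) = ⋃ q ∈ {q | lt q p}, piece lt L f q := by
  ext x
  obtain ⟨q, hq⟩ := x.2.1.exists_hasLabel hanti x.2.2
  simp only [mem_iUnion, mem_ofPred_eq, exists_prop]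
  refine ⟨fun h ↦ ⟨q, lt_of_mem_derivedSet_piece htrans hq h, hq⟩, ?_⟩
  rintro ⟨q', hq'p, hq'⟩
  exact mem_derivedSet_piece_of_lt htrans hq' hq'p

theorem isCompact_closure_piece [Finite P] (hL : ∀ p ∈ L, ∀ q, lt q p → q ∈ L) {p : P}
    (hp : p ∈ L) : IsCompact (closure (piece lt L f p)) := by
  have hroots : {a : P × ℕ | a.2 < (f a.1 : ℕ)}.Finite :=
    (finite_iUnion fun q : P ↦ (finite_Iio (f q : ℕ)).image (Prod.mk q)).subset
      fun a ha ↦ mem_iUnion.2 ⟨a.1, a.2, ha, rfl⟩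
  have hK : IsCompact (⋃ a ∈ {a : P × ℕ | a.2 < (f a.1 : ℕ)},
      {x : BranchSpace lt L f | x.1 0 = ↑[a]}) :=
    hroots.isCompact_biUnion fun a _ ↦ isCompact_setOf_apply_eq 0 [a]
  refine hK.of_isClosed_subset isClosed_closure (closure_minimal (fun x hx ↦ ?_) hK.isClosed)
  obtain ⟨a, ha, hroot⟩ := x.exists_root
  have haL : a.1 ∈ L := by
    rcases x.2.1.eq_or_lt_of_hasLabel (by rw [ha, nodeLabel_singleton]) hx with h | h
    exacts [h ▸ hp, hL p hp _ h]
  exact mem_biUnion (hroot.resolve_right (not_not.2 haL)) ha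

theorem not_isCompact_closure_piece {p : P} (hp : p ∉ L) :
    ¬ IsCompact (closure (piece lt L f p)) := by
  intro hK
  have hroot n : IsNode lt L f [(p, n)] := isNode_singleton (Or.inr hp)
  have hlim : finiteBranch [] ∈ Subtype.val '' closure (piece lt L f p) :=
    (hK.image continuous_subtype_val).isClosed.mem_of_tendsto
      (tendsto_finiteBranch_append [] p)
      (Eventually.of_forall fun n ↦ ⟨ofNode (hroot n), subset_closure (ofNode_mem_piece _), rfl⟩)
  obtain ⟨x, -, hx⟩ := hlim
  exact x.2.2 (congrFun hx 0)

end Topology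

structure IsCompleteExtendedPartition {X : Type*} [TopologicalSpace X] (lt : P → P → Prop)
    (L : Set P) (f : P → ℕ+) (Xp : P → Set X) : Prop where
  nonempty : ∀ p, (Xp p).Nonempty
  pairwise_disjoint : Pairwise (Function.onFun Disjoint Xp)
  iUnion_eq_univ : ⋃ p, Xp p = univ
  derivedSet_eq : ∀ p, derivedSet (Xp p) = ⋃ q ∈ {q | lt q p}, Xp q
  isCompact_closure_iff : ∀ p, IsCompact (closure (Xp p)) ↔ p ∈ L
  ncard_eq : ∀ p ∈ L, (∀ q ∈ L, lt q p → q = p) → ¬ lt p p → (Xp p).ncard = f p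

theorem IsCompleteExtendedPartition.comp_equiv {Q X : Type*} [TopologicalSpace X] (e : P ≃ Q)
    {Xp : Q → Set X} (h : IsCompleteExtendedPartition (fun a b ↦ lt (e.symm a) (e.symm b))
      (e.symm ⁻¹' L) (f ∘ e.symm) Xp) :
    IsCompleteExtendedPartition lt L f (Xp ∘ e) where
  nonempty p := h.nonempty (e p)
  pairwise_disjoint := h.pairwise_disjoint.comp_of_injective e.injective
  iUnion_eq_univ := (e.surjective.iUnion_comp Xp).trans h.iUnion_eq_univ
  derivedSet_eq p := by
    rw [Function.comp_apply, h.derivedSet_eq]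
    ext x
    simp [e.exists_congr_left]
  isCompact_closure_iff p := by simpa using h.isCompact_closure_iff (e p)
  ncard_eq p hp hmin hnd := by
    refine (h.ncard_eq (e p) (by simpa) (fun q hq hlt ↦ ?_) (by simpa)).trans (by simp)
    simpa using congrArg e (hmin _ hq (by simpa using hlt))

theorem isCompleteExtendedPartition_piece [Finite P] [TopologicalSpace P] [DiscreteTopology P]
    (htrans : ∀ a b c, lt a b → lt b c → lt a c) (hanti : ∀ a b, lt a b → lt b a → a = b)
    (hL : ∀ p ∈ L, ∀ q, lt q p → q ∈ L) :
    IsCompleteExtendedPartition lt L f (piece lt L f) where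
  nonempty p := ⟨_, ofNode_mem_piece (isNode_singleton (a := (p, 0)) (Or.inl (f p).pos))⟩
  pairwise_disjoint _ _ hpq := disjoint_left.2 fun _ hp hq ↦ hpq (hp.unique hq)
  iUnion_eq_univ := eq_univ_of_forall fun x ↦ mem_iUnion.2 (x.2.1.exists_hasLabel hanti x.2.2)
  derivedSet_eq := derivedSet_piece htrans hanti
  isCompact_closure_iff _ :=
    ⟨fun h ↦ by_contra fun hp ↦ not_isCompact_closure_piece hp h, isCompact_closure_piece hL⟩
  ncard_eq _ hp hmin hnd := ncard_piece htrans hL hp hmin hnd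

end BranchSpace

/-- For every finite extended PO system `[P, L, f]` — `P` a finite PO system, `L` a
lower subset, `f : L_min ∩ P^d → ℕ₊` — there is a second countable Stone space `X`
admitting a complete `[P, L, f]`-partition: a complete `P`-partition `{X_p}` with
`closure X_p` compact iff `p ∈ L`, and `|X_p| = f p` for `p ∈ L_min ∩ P^d`. -/
theorem exists_complete_extended_partition
    {P : Type*} [Fintype P] (lt : P → P → Prop)
    (htrans : ∀ a b c, lt a b → lt b c → lt a c)
    (hanti : ∀ a b, lt a b → lt b a → a = b)
    (L : Set P) (hL : ∀ p ∈ L, ∀ q, lt q p → q ∈ L)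
    (f : P → ℕ+) :
    ∃ (W : TopPkg) (Xp : P → Set W.carrier),
      LocallyCompactSpace W.carrier ∧ T2Space W.carrier ∧
      TotallyDisconnectedSpace W.carrier ∧ SecondCountableTopology W.carrier ∧
      (∀ p, (Xp p).Nonempty) ∧
      Pairwise (Function.onFun Disjoint Xp) ∧
      (⋃ p, Xp p) = Set.univ ∧
      (∀ p, derivedSet (Xp p) = ⋃ q ∈ {q | lt q p}, Xp q) ∧
      (∀ p, IsCompact (closure (Xp p)) ↔ p ∈ L) ∧
      (∀ p, p ∈ L → (∀ q ∈ L, lt q p → q = p) → ¬ lt p p →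
        (Xp p).ncard = f p) := by
  -- `TopPkg.carrier` lives in `Type`, so the construction is carried out on `Fin (card P)`.
  let e := Fintype.equivFin P
  have h := (isCompleteExtendedPartition_piece (lt := fun a b ↦ lt (e.symm a) (e.symm b))
    (L := e.symm ⁻¹' L) (f := f ∘ e.symm) (fun _ _ _ ↦ htrans _ _ _)
    (fun _ _ hab hba ↦ e.symm.injective (hanti _ _ hab hba)) fun _ hp _ ↦ hL _ hp _).comp_equiv e
  exact ⟨⟨BranchSpace _ _ _⟩, _, inferInstance, inferInstance, inferInstance, inferInstance,
    h.nonempty, h.pairwise_disjoint, h.iUnion_eq_univ, h.derivedSet_eq, h.isCompact_closure_iff,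
    h.ncard_eq⟩
end
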